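/- arXiv:2012.11949 — 11 statements merged into one kernel-verified Lean document; each statement's English description precedes it below -/
import Mathlib

section
/- (Qubit Fisher decomposition, Lemma 1.) Let θ ∈ ℝ³ with |θ| < 1 and let Π = {Π_x}_{x∈X} (X finite) be a POVM on ℂ², i.e. each Π_x is a 2×2 complex positive semidefinite matrix and Σ_x Π_x = I₂, such that tr(ρ_θ Π_x) > 0 for all x. Then the classical Fisher information matrix F(Π) can be written as F(Π) = √S_θ · J · √S_θ for some real symmetric positive semidefinite 3×3 matrix J with Tr J ≤ 1, where S_θ = (I₃ − θθᵗ)^{-1} and √S_θ is its positive definite square root. -/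
open Matrix Complex
open scoped ComplexOrder

noncomputable def pauli : Fin 3 → Matrix (Fin 2) (Fin 2) ℂ :=
  ![!![0, 1; 1, 0], !![0, -Complex.I; Complex.I, 0], !![1, 0; 0, -1]]

/-- The Bloch-parametrized qubit state `ρ_θ = (1/2)(I₂ + θ₁σ₁ + θ₂σ₂ + θ₃σ₃)`. -/
noncomputable def qubitState (θ : Fin 3 → ℝ) : Matrix (Fin 2) (Fin 2) ℂ :=
  (2 : ℂ)⁻¹ • (1 + ∑ i, (θ i : ℂ) • pauli i)

/-- The classical Fisher information matrix at `θ` of a POVM `M` on `ℂ²`: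
`F(M)_{ij} = Σ_x (Re tr(σ_i M_x))·(Re tr(σ_j M_x)) / (4 tr(ρ_θ M_x))`. -/
noncomputable def fisher {X : Type} [Fintype X] (θ : Fin 3 → ℝ)
    (M : X → Matrix (Fin 2) (Fin 2) ℂ) : Matrix (Fin 3) (Fin 3) ℝ :=
  Matrix.of fun i j => ∑ x : X,
    ((pauli i * M x).trace.re * (pauli j * M x).trace.re) /
      (4 * (qubitState θ * M x).trace.re)

lemma pauli_tr0 (M : Matrix (Fin 2) (Fin 2) ℂ) : (pauli 0 * M).trace = M 1 0 + M 0 1 := by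
  simp [pauli, Matrix.trace, Matrix.mul_apply, Fin.sum_univ_two, Matrix.vecMul, dotProduct, Matrix.vecHead, Matrix.vecTail]

lemma pauli_tr1 (M : Matrix (Fin 2) (Fin 2) ℂ) :
    (pauli 1 * M).trace = Complex.I * (M 0 1 - M 1 0) := by
  simp [pauli, Matrix.trace, Matrix.mul_apply, Fin.sum_univ_two, Matrix.vecMul, dotProduct, Matrix.vecHead, Matrix.vecTail]
  ring

lemma pauli_tr2 (M : Matrix (Fin 2) (Fin 2) ℂ) : (pauli 2 * M).trace = M 0 0 - M 1 1 := by
  simp [pauli, Matrix.trace, Matrix.mul_apply, Fin.sum_univ_two, Matrix.vecMul, dotProduct, Matrix.vecHead, Matrix.vecTail]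
  ring

lemma det_nonneg_psd (M : Matrix (Fin 2) (Fin 2) ℂ) (hM : M.PosSemidef) : 0 ≤ M.det := by
  rw [hM.isHermitian.det_eq_prod_eigenvalues]
  norm_cast
  rw [RCLike.ofReal_nonneg]
  exact Finset.prod_nonneg fun i _ => hM.eigenvalues_nonneg i

lemma key_ineq (M : Matrix (Fin 2) (Fin 2) ℂ) (hM : M.PosSemidef) :
    ∑ i, ((pauli i * M).trace.re)^2 ≤ (M.trace.re)^2 := by
  have hb : star (M 0 1) = M 1 0 := hM.1.apply 1 0
  have hdet := det_nonneg_psd M hM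
  rw [Matrix.det_fin_two] at hdet
  have h00 : 0 ≤ M 0 0 := by
    simpa [Matrix.mulVec_single, dotProduct] using hM.dotProduct_mulVec_nonneg (Pi.single 0 1)
  have h11 : 0 ≤ M 1 1 := by
    simpa [Matrix.mulVec_single, dotProduct] using hM.dotProduct_mulVec_nonneg (Pi.single 1 1)
  rw [Complex.nonneg_iff] at h00 h11 hdet
  rw [Fin.sum_univ_three, pauli_tr0, pauli_tr1, pauli_tr2, Matrix.trace_fin_two]
  rw [← hb] at hdet ⊢
  obtain ⟨h1, h2⟩ := h00
  obtain ⟨h3, h4⟩ := h11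
  obtain ⟨h5, -⟩ := hdet
  simp only [Complex.add_re, Complex.sub_re, Complex.mul_re, Complex.I_re, Complex.I_im,
    Complex.sub_im, RCLike.star_def, Complex.conj_re, Complex.conj_im, Complex.mul_im] at h5 ⊢
  nlinarith [sq_nonneg ((M 0 1).re), sq_nonneg ((M 0 1).im)]

lemma p_eq (θ : Fin 3 → ℝ) (M : Matrix (Fin 2) (Fin 2) ℂ) :
    2 * (qubitState θ * M).trace.re = M.trace.re + ∑ i, θ i * (pauli i * M).trace.re := by
  have : qubitState θ * M = (2:ℂ)⁻¹ • (M + ∑ i, (θ i : ℂ) • (pauli i * M)) := by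
    rw [qubitState, Matrix.smul_mul, Matrix.add_mul, Matrix.one_mul, Finset.sum_mul]
    simp [smul_mul_assoc]
  rw [this, Matrix.trace_smul, Matrix.trace_add, Matrix.trace_sum]
  simp only [Matrix.trace_smul]
  simp [Complex.re_sum, smul_eq_mul]

lemma vecMulVec_psd (v : Fin 3 → ℝ) : (Matrix.vecMulVec v v).PosSemidef := by
  refine Matrix.PosSemidef.of_dotProduct_mulVec_nonneg ?_ ?_
  · exact Matrix.IsHermitian.ext fun i j => by simp [Matrix.vecMulVec_apply, mul_comm]
  · intro x
    have : dotProduct (star x) (Matrix.vecMulVec v v *ᵥ x) = (∑ i, v i * x i)^2 := by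
      simp only [dotProduct, Matrix.mulVec, Matrix.vecMulVec_apply, star_trivial,
        dotProduct]
      rw [sq, Finset.sum_mul_sum]
      apply Finset.sum_congr rfl; intro i _
      rw [Finset.mul_sum]
      apply Finset.sum_congr rfl; intro j _
      ring
    rw [this]
    positivity

lemma psd_smul {A : Matrix (Fin 3) (Fin 3) ℝ} (hA : A.PosSemidef) {c : ℝ} (hc : 0 ≤ c) :
    (c • A).PosSemidef := by
  refine Matrix.PosSemidef.of_dotProduct_mulVec_nonneg ?_ ?_
  · exact Matrix.IsHermitian.ext fun i j => by
      simpa [Matrix.smul_apply] using congrArg (c * ·) (Matrix.IsHermitian.apply hA.1 i j)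
  · intro x
    rw [Matrix.smul_mulVec, dotProduct_smul, smul_eq_mul]
    exact mul_nonneg hc (hA.dotProduct_mulVec_nonneg x)

lemma psd_sum {X : Type} [Fintype X] (f : X → Matrix (Fin 3) (Fin 3) ℝ)
    (h : ∀ x, (f x).PosSemidef) : (∑ x, f x).PosSemidef := by
  classical
  exact Finset.sum_induction f _ (fun a b ha hb => ha.add hb) Matrix.PosSemidef.zero
    (fun x _ => h x)

lemma oneSub_posdef (θ : Fin 3 → ℝ) (hθ : ∑ i, (θ i) ^ 2 < 1) :
    (1 - Matrix.vecMulVec θ θ).PosDef := by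
  refine Matrix.PosDef.of_dotProduct_mulVec_pos ?_ ?_
  · exact Matrix.IsHermitian.ext fun i j => by
      simp only [star_trivial, Matrix.sub_apply, Matrix.one_apply, Matrix.vecMulVec_apply,
        mul_comm, eq_comm]
  · intro x hx
    have hd : dotProduct (star x) ((1 - Matrix.vecMulVec θ θ) *ᵥ x)
        = (∑ i, x i ^ 2) - (∑ i, θ i * x i)^2 := by
      rw [Matrix.sub_mulVec, dotProduct_sub, Matrix.one_mulVec]
      congr 1
      · simp [dotProduct, sq]
      · simp only [dotProduct, Matrix.mulVec, Matrix.vecMulVec_apply, star_trivial]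
        rw [sq, Finset.sum_mul_sum]
        apply Finset.sum_congr rfl; intro i _
        rw [Finset.mul_sum]
        apply Finset.sum_congr rfl; intro j _
        ring
    rw [hd]
    have hx2 : 0 < ∑ i, x i ^ 2 := by
      rcases Function.ne_iff.mp hx with ⟨i, hi⟩
      have hxi : x i ≠ 0 := by simpa using hi
      have : 0 < x i ^ 2 := by positivity
      exact this.trans_le (Finset.single_le_sum (fun j _ => sq_nonneg (x j)) (Finset.mem_univ i))
    have hcs : (∑ i, θ i * x i)^2 ≤ (∑ i, θ i ^2) * ∑ i, x i ^2 :=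
      Finset.sum_mul_sq_le_sq_mul_sq _ _ _
    nlinarith [sq_nonneg (∑ i, θ i * x i)]

lemma trace_mul_vmv (θ v : Fin 3 → ℝ) :
    ((1 - Matrix.vecMulVec θ θ) * Matrix.vecMulVec v v).trace
      = (∑ i, v i ^ 2) - (∑ i, θ i * v i)^2 := by
  rw [Matrix.sub_mul, Matrix.one_mul, Matrix.trace_sub]
  congr 1
  · simp [Matrix.trace, Matrix.vecMulVec_apply, sq]
  · simp only [Matrix.trace, Matrix.diag, Matrix.mul_apply, Matrix.vecMulVec_apply]
    rw [sq, Finset.sum_mul_sum, Finset.sum_comm]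
    apply Finset.sum_congr rfl; intro i _
    apply Finset.sum_congr rfl; intro j _
    ring

/-- (Qubit Fisher decomposition, Lemma 1.) For any POVM `M` on `ℂ²` with positive outcome
probabilities, the classical Fisher information matrix can be written as `√S_θ J √S_θ` for
some real symmetric positive semidefinite `J` with `Tr J ≤ 1`, where `S_θ = (I₃ − θθᵗ)⁻¹`
and `√S_θ` is its positive definite square root. -/
theorem qubit_fisher_decomposition (θ : Fin 3 → ℝ) (hθ : ∑ i, (θ i) ^ 2 < 1)
    {X : Type} [Fintype X] (M : X → Matrix (Fin 2) (Fin 2) ℂ)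
    (hM : ∀ x, (M x).PosSemidef) (hsum : ∑ x : X, M x = 1)
    (hpr : ∀ x, 0 < (qubitState θ * M x).trace.re)
    (R : Matrix (Fin 3) (Fin 3) ℝ) (hR : R.PosDef)
    (hRR : R * R = (1 - Matrix.vecMulVec θ θ)⁻¹) :
    ∃ J : Matrix (Fin 3) (Fin 3) ℝ, J.PosSemidef ∧ J.trace ≤ 1 ∧
      fisher θ M = R * J * R := by
  classical
  set v : X → Fin 3 → ℝ := fun x i => (pauli i * M x).trace.re with hv
  set p : X → ℝ := fun x => (qubitState θ * M x).trace.re with hp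
  have hppos : ∀ x, 0 < p x := hpr
  have hFrep : fisher θ M = ∑ x : X, (4 * p x)⁻¹ • Matrix.vecMulVec (v x) (v x) := by
    ext i j
    simp only [fisher, Matrix.of_apply, Matrix.sum_apply, Matrix.smul_apply,
      Matrix.vecMulVec_apply, smul_eq_mul]
    exact Finset.sum_congr rfl fun x _ => div_eq_inv_mul _ _
  have hFpsd : (fisher θ M).PosSemidef := by
    rw [hFrep]
    exact psd_sum _ fun x => psd_smul (vecMulVec_psd _) (by have h := hppos x; positivity)
  have hA : (1 - Matrix.vecMulVec θ θ).PosDef := oneSub_posdef θ hθ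
  have hAdet : IsUnit (1 - Matrix.vecMulVec θ θ).det := hA.det_pos.ne'.isUnit
  have hRdet : IsUnit R.det := hR.det_pos.ne'.isUnit
  have hRR' : R⁻¹ * R⁻¹ = 1 - Matrix.vecMulVec θ θ := by
    rw [← Matrix.mul_inv_rev, hRR, Matrix.nonsing_inv_nonsing_inv _ hAdet]
  have hRinvH : (R⁻¹)ᴴ = R⁻¹ := by
    rw [Matrix.conjTranspose_nonsing_inv, hR.1.eq]
  refine ⟨R⁻¹ * fisher θ M * R⁻¹, ?_, ?_, ?_⟩
  · have := hFpsd.conjTranspose_mul_mul_same R⁻¹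
    rwa [hRinvH] at this
  · rw [Matrix.trace_mul_cycle, hRR', hFrep, Finset.mul_sum, Matrix.trace_sum]
    have hterm : ∀ x : X,
        ((1 - Matrix.vecMulVec θ θ) * ((4 * p x)⁻¹ • Matrix.vecMulVec (v x) (v x))).trace
          = (4 * p x)⁻¹ * ((∑ i, v x i ^ 2) - (∑ i, θ i * v x i)^2) := by
      intro x
      rw [Matrix.mul_smul, Matrix.trace_smul, trace_mul_vmv, smul_eq_mul]
    calc ∑ x : X, ((1 - Matrix.vecMulVec θ θ) * ((4 * p x)⁻¹ • Matrix.vecMulVec (v x) (v x))).trace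
        ≤ ∑ x : X, ((M x).trace.re - ∑ i, θ i * v x i) / 2 := by
          refine Finset.sum_le_sum fun x _ => ?_
          rw [hterm x]
          have h2p : 2 * p x = (M x).trace.re + ∑ i, θ i * v x i := p_eq θ (M x)
          have hv2 : ∑ i, v x i ^ 2 ≤ ((M x).trace.re)^2 := key_ineq (M x) (hM x)
          have h4p : (0:ℝ) < 4 * p x := by have := hppos x; linarith
          rw [inv_mul_le_iff₀ h4p]
          nlinarith [hv2, h2p, hppos x]
      _ = 1 := by
          have hsc : ∑ x : X, (M x).trace.re = 2 := by
            have h1 : ∑ x : X, (M x).trace = 2 := by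
              rw [← Matrix.trace_sum, hsum, Matrix.trace_one]
              norm_num
            calc ∑ x : X, (M x).trace.re = (∑ x : X, (M x).trace).re := by
                  rw [Complex.re_sum]
              _ = 2 := by rw [h1]; norm_num
          have hsv : ∀ i, ∑ x : X, v x i = 0 := by
            intro i
            have h1 : ∑ x : X, (pauli i * M x).trace = 0 := by
              rw [← Matrix.trace_sum, ← Finset.mul_sum, hsum, Matrix.mul_one]
              fin_cases i <;> simp [pauli, Matrix.trace_fin_two]
            calc ∑ x : X, v x i = (∑ x : X, (pauli i * M x).trace).re := by
                  rw [Complex.re_sum]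
              _ = 0 := by rw [h1]; norm_num
          rw [← Finset.sum_div, Finset.sum_sub_distrib, hsc, Finset.sum_comm]
            -- goal: (2 - ∑ i, ∑ x, θ i * v x i)/2 = 1
          have : ∀ i : Fin 3, ∑ x : X, θ i * v x i = 0 := fun i => by
            rw [← Finset.mul_sum, hsv i, mul_zero]
          rw [Finset.sum_congr rfl fun i _ => this i]
          norm_num
  · rw [← Matrix.mul_assoc, ← Matrix.mul_assoc, Matrix.mul_nonsing_inv _ hRdet,
      Matrix.one_mul, Matrix.mul_assoc, Matrix.nonsing_inv_mul _ hRdet, Matrix.mul_one]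
end

section
/- (Gill–Massar inequality, Corollary 1.) Let θ ∈ ℝ³ with |θ| < 1 and let Π = {Π_x}_{x∈X} be a POVM on ℂ² with tr(ρ_θ Π_x) > 0 for all x. Then Tr{(I₃ − θθᵗ) · F(Π)} ≤ 1. Moreover, if every element Π_x has rank at most one, then equality holds: Tr{(I₃ − θθᵗ) · F(Π)} = 1. -/
open Matrix Complex
open scoped ComplexOrder

namespace GillMassarAux

/-- The sum of squared Pauli coefficients of a Hermitian 2×2 matrix. -/
lemma sq_sum_pauli (A : Matrix (Fin 2) (Fin 2) ℂ) (h : A.IsHermitian) :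
    ∑ i, ((pauli i * A).trace.re) ^ 2 = (A.trace.re) ^ 2 - 4 * A.det.re := by
  have h10 : A 1 0 = starRingEnd ℂ (A 0 1) := (h.apply 1 0).symm
  have h00 : (A 0 0).im = 0 := by
    have := h.apply 0 0
    simpa [Complex.star_def, Complex.conj_eq_iff_im] using this
  have h11 : (A 1 1).im = 0 := by
    have := h.apply 1 1
    simpa [Complex.star_def, Complex.conj_eq_iff_im] using this
  simp [pauli, Matrix.trace, Matrix.mul_apply, Matrix.det_fin_two, Fin.sum_univ_three,
    Fin.sum_univ_two, Matrix.diag, h10, h00, h11, Complex.mul_re, Complex.add_re]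
  ring

lemma det_re_nonneg (A : Matrix (Fin 2) (Fin 2) ℂ) (h : A.PosSemidef) : 0 ≤ A.det.re := by
  rw [h.isHermitian.det_eq_prod_eigenvalues, ← RCLike.ofReal_prod]
  exact_mod_cast Finset.prod_nonneg fun i (_ : i ∈ Finset.univ) => h.eigenvalues_nonneg i

lemma det_eq_zero_of_rank_le_one (A : Matrix (Fin 2) (Fin 2) ℂ) (h : A.rank ≤ 1) :
    A.det = 0 := by
  by_contra hd
  have hu : IsUnit A := A.isUnit_iff_isUnit_det.mpr (isUnit_iff_ne_zero.mpr hd)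
  have hr := A.rank_of_isUnit hu
  rw [hr] at h
  simp at h

lemma trace_state_mul (θ : Fin 3 → ℝ) (A : Matrix (Fin 2) (Fin 2) ℂ) :
    (qubitState θ * A).trace.re
      = (A.trace.re + ∑ i, θ i * (pauli i * A).trace.re) / 2 := by
  have hq : qubitState θ * A = (2:ℂ)⁻¹ • (A + ∑ i, (θ i : ℂ) • (pauli i * A)) := by
    simp [qubitState, add_mul, Finset.sum_mul, smul_mul_assoc]
  rw [hq]
  simp [Matrix.trace_smul, Matrix.trace_add, Matrix.trace_sum, Complex.add_re,
    Complex.mul_re, Complex.re_sum, Fin.sum_univ_three]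
  ring

lemma sum_swap3 {α β γ : Type*} [Fintype α] [Fintype β] [Fintype γ] (f : α → β → γ → ℝ) :
    ∑ i : α, ∑ j : β, ∑ x : γ, f i j x = ∑ x : γ, ∑ i : α, ∑ j : β, f i j x := by
  trans ∑ i : α, ∑ x : γ, ∑ j : β, f i j x
  · exact Finset.sum_congr rfl fun i _ => Finset.sum_comm
  · exact Finset.sum_comm

lemma trace_expand {X : Type} [Fintype X] (θ : Fin 3 → ℝ)
    (M : X → Matrix (Fin 2) (Fin 2) ℂ)
    (hpr : ∀ x, 0 < (qubitState θ * M x).trace.re) :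
    ((1 - Matrix.vecMulVec θ θ) * fisher θ M).trace
      = ∑ x, ((∑ i, ((pauli i * M x).trace.re) ^ 2)
          - (∑ i, θ i * (pauli i * M x).trace.re) ^ 2)
            / (4 * (qubitState θ * M x).trace.re) := by
  have h1 : ((1 - Matrix.vecMulVec θ θ) * fisher θ M).trace
      = ∑ i, ∑ j, (1 - Matrix.vecMulVec θ θ) i j * (fisher θ M) j i := by
    simp [Matrix.trace, Matrix.diag, Matrix.mul_apply]
  rw [h1]
  simp only [fisher, Matrix.of_apply, Finset.mul_sum]
  rw [sum_swap3]
  refine Finset.sum_congr rfl fun x _ => ?_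
  have hne : (4 : ℝ) * (qubitState θ * M x).trace.re ≠ 0 := by
    have := hpr x; positivity
  simp only [Fin.sum_univ_three, Matrix.sub_apply, Matrix.one_apply, Matrix.vecMulVec_apply]
  norm_num [Fin.ext_iff]
  field_simp
  ring

end GillMassarAux

/-- (Gill–Massar inequality, Corollary 1.) For any POVM `M` on `ℂ²` with positive outcome
probabilities at `θ` (`|θ| < 1`), `Tr{(I₃ − θθᵗ) F(M)} ≤ 1`, with equality whenever every
POVM element has rank at most one. -/
theorem gill_massar_inequality (θ : Fin 3 → ℝ) (hθ : ∑ i, (θ i) ^ 2 < 1)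
    {X : Type} [Fintype X] (M : X → Matrix (Fin 2) (Fin 2) ℂ)
    (hM : ∀ x, (M x).PosSemidef) (hsum : ∑ x : X, M x = 1)
    (hpr : ∀ x, 0 < (qubitState θ * M x).trace.re) :
    ((1 - Matrix.vecMulVec θ θ) * fisher θ M).trace ≤ 1 ∧
      ((∀ x, (M x).rank ≤ 1) →
        ((1 - Matrix.vecMulVec θ θ) * fisher θ M).trace = 1) := by
  classical
  have hLHS := GillMassarAux.trace_expand θ M hpr
  -- notation shortcuts via plain lets
  set A : X → Fin 3 → ℝ := fun x i => ((pauli i * M x).trace).re with hAdef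
  set t : X → ℝ := fun x => ((M x).trace).re with htdef
  set s : X → ℝ := fun x => ∑ i, θ i * A x i with hsdef
  set p : X → ℝ := fun x => ((qubitState θ * M x).trace).re with hpdef
  have hps : ∀ x, p x = (t x + s x) / 2 := fun x => GillMassarAux.trace_state_mul θ (M x)
  -- sum of traces is 2
  have ht2 : ∑ x, t x = 2 := by
    have h2 : ∑ x, (M x).trace = (2 : ℂ) := by
      rw [← Matrix.trace_sum, hsum]
      simp [Matrix.trace_one]
    have := congrArg Complex.re h2
    simpa [Complex.re_sum] using this
  -- sum of Pauli coefficients is 0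
  have hA0 : ∀ i, ∑ x, A x i = 0 := by
    intro i
    have htr : ∑ x, (pauli i * M x).trace = (pauli i).trace := by
      rw [← Matrix.trace_sum, ← Finset.mul_sum, hsum, mul_one]
    have := congrArg Complex.re htr
    rw [Complex.re_sum] at this
    have hz : (pauli i).trace.re = 0 := by
      fin_cases i <;> simp [pauli, Matrix.trace, Fin.sum_univ_two, Matrix.diag]
    simpa [hAdef, hz] using this
  have hsum1 : ∑ x, (t x - s x) / 2 = 1 := by
    rw [← Finset.sum_div, Finset.sum_sub_distrib, ht2]
    have hs0 : ∑ x, s x = 0 := by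
      simp only [hsdef]
      rw [Finset.sum_comm]
      refine Finset.sum_eq_zero fun i _ => ?_
      rw [← Finset.mul_sum, hA0 i, mul_zero]
    rw [hs0]
    norm_num
  -- per-outcome bounds
  have hub : ∀ x, ((∑ i, A x i ^ 2) - s x ^ 2) / (4 * p x) ≤ (t x - s x) / 2 := by
    intro x
    have hpx := hpr x
    have hd := GillMassarAux.det_re_nonneg (M x) (hM x)
    have hsq := GillMassarAux.sq_sum_pauli (M x) (hM x).1
    have h4 : 4 * p x = 2 * (t x + s x) := by rw [hps x]; ring
    rw [div_le_div_iff₀ (by exact_mod_cast by positivity) (by norm_num : (0:ℝ) < 2)]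
    rw [hsq, h4]
    nlinarith [hd]
  have heq : ∀ x, (M x).rank ≤ 1 →
      ((∑ i, A x i ^ 2) - s x ^ 2) / (4 * p x) = (t x - s x) / 2 := by
    intro x hrk
    have hpx := hpr x
    have hd0 : (M x).det.re = 0 := by
      rw [GillMassarAux.det_eq_zero_of_rank_le_one (M x) hrk]; rfl
    have hsq := GillMassarAux.sq_sum_pauli (M x) (hM x).1
    have h4 : 4 * p x = 2 * (t x + s x) := by rw [hps x]; ring
    rw [div_eq_div_iff (by exact_mod_cast by positivity) (by norm_num : (2:ℝ) ≠ 0)]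
    rw [hsq, hd0, h4]
    ring
  constructor
  · rw [hLHS]
    calc ∑ x, ((∑ i, A x i ^ 2) - s x ^ 2) / (4 * p x)
        ≤ ∑ x, (t x - s x) / 2 := Finset.sum_le_sum fun x _ => hub x
      _ = 1 := hsum1
  · intro hrk
    rw [hLHS, ← hsum1]
    exact Finset.sum_congr rfl fun x _ => heq x (hrk x)
end

section
/- (SLD dominance of classical Fisher information for a qubit.) Let θ ∈ ℝ³ with |θ| < 1 and let Π = {Π_x}_{x∈X} be a POVM on ℂ² with tr(ρ_θ Π_x) > 0 for all x. Then the classical Fisher information matrix is dominated by the SLD Fisher information matrix in the Loewner order: F(Π) ≤ (I₃ − θθᵗ)^{-1}. -/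
open Matrix Complex
open scoped ComplexOrder

/-! ### Auxiliary lemmas -/

lemma psd_trace_nonneg' {n : Type*} [Fintype n] [DecidableEq n] {A : Matrix n n ℂ}
    (hA : A.PosSemidef) : 0 ≤ A.trace := by
  rw [Matrix.trace]
  apply Finset.sum_nonneg
  intro i _
  have := hA.dotProduct_mulVec_nonneg (Pi.single i 1)
  simpa [dotProduct, Matrix.mulVec, Pi.single_apply] using this

lemma psd_trace_mul_nonneg' {n : Type*} [Fintype n] [DecidableEq n]
    {A B : Matrix n n ℂ} (hA : A.PosSemidef) (hB : B.PosSemidef) :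
    0 ≤ (A * B).trace := by
  open scoped MatrixOrder in
  (have hA0 : (0 : Matrix n n ℂ) ≤ A := Matrix.nonneg_iff_posSemidef.mpr hA
   have hS : CFC.sqrt A * CFC.sqrt A = A := CFC.sqrt_mul_sqrt_self A hA0
   have h1 : (CFC.sqrt A * B * (CFC.sqrt A)ᴴ).PosSemidef := hB.mul_mul_conjTranspose_same _
   have h2 : (CFC.sqrt A)ᴴ = CFC.sqrt A :=
     (Matrix.nonneg_iff_posSemidef.mp (CFC.sqrt_nonneg A)).1
   rw [h2] at h1
   have := psd_trace_nonneg' h1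
   rwa [Matrix.trace_mul_cycle, hS] at this)

/-- Cauchy–Schwarz-type bound via a nonnegative quadratic. -/
lemma key_cs' {ρ L M : Matrix (Fin 2) (Fin 2) ℂ} (hρ : ρ.PosSemidef) (hL : L.IsHermitian)
    (hM : M.PosSemidef) :
    (((L * ρ * M).trace + (ρ * L * M).trace).re) ^ 2
      ≤ 4 * ((L * ρ * L * M).trace.re) * ((ρ * M).trace.re) := by
  have key : ∀ t : ℝ, 0 ≤ (L * ρ * L * M).trace.re * (t * t)
      + ((L * ρ * M).trace + (ρ * L * M).trace).re * t + (ρ * M).trace.re := by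
    intro t
    have hC : (1 + t • L)ᴴ = 1 + t • L := by
      rw [conjTranspose_add, conjTranspose_smul, hL.eq]; simp
    have hpsd : ((1 + t • L)ᴴ * ρ * (1 + t • L)).PosSemidef :=
      hρ.conjTranspose_mul_mul_same _
    rw [hC] at hpsd
    have h0 : 0 ≤ (((1 + t • L) * ρ * (1 + t • L)) * M).trace :=
      psd_trace_mul_nonneg' hpsd hM
    have hexp : ((1 + t • L) * ρ * (1 + t • L)) * M
        = ρ * M + t • (L * ρ * M + ρ * L * M) + (t * t) • (L * ρ * L * M) := by
      simp only [Matrix.add_mul, Matrix.mul_add, Matrix.smul_mul, Matrix.mul_smul,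
        Matrix.one_mul, Matrix.mul_one, smul_smul, smul_add]
      abel
    rw [hexp] at h0
    have := h0.1
    simp only [Matrix.trace_add, Matrix.trace_smul, Complex.add_re, Complex.zero_re,
      Complex.real_smul, Complex.mul_re, Complex.ofReal_re, Complex.ofReal_im] at this ⊢
    nlinarith [this]
  have hd := discrim_le_zero key
  rw [discrim] at hd
  nlinarith [hd]

lemma real_aux' (t0 t1 t2 u0 u1 u2 n : ℝ) (hs : t0^2+t1^2+t2^2 ≤ 1)
    (hu : u0^2+u1^2+u2^2 = n^2) (hn : 0 ≤ n) :
    0 ≤ n + (t0*u0 + t1*u1 + t2*u2) := by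
  nlinarith [sq_nonneg (t0*u1 - t1*u0), sq_nonneg (t0*u2 - t2*u0), sq_nonneg (t1*u2 - t2*u1),
    sq_nonneg (t0*u0 + t1*u1 + t2*u2), hn, sq_nonneg n]

lemma qubitState_form' (θ : Fin 3 → ℝ) (x : Fin 2 → ℂ) :
    star x ⬝ᵥ qubitState θ *ᵥ x =
      ((2⁻¹ * ((Complex.normSq (x 0) + Complex.normSq (x 1))
        + θ 0 * (2 * ((starRingEnd ℂ) (x 0) * x 1).re)
        + θ 1 * (2 * ((starRingEnd ℂ) (x 0) * x 1).im)
        + θ 2 * (Complex.normSq (x 0) - Complex.normSq (x 1))) : ℝ) : ℂ) := by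
  apply Complex.ext <;>
    · simp [qubitState, pauli, dotProduct, Matrix.mulVec, Fin.sum_univ_two,
        Fin.sum_univ_three, Complex.normSq_apply, Complex.add_re, Complex.mul_re,
        Complex.mul_im]
      ring

lemma qubitState_psd' (θ : Fin 3 → ℝ) (hθ : θ 0 ^ 2 + θ 1 ^ 2 + θ 2 ^ 2 ≤ 1) :
    (qubitState θ).PosSemidef := by
  refine Matrix.PosSemidef.of_dotProduct_mulVec_nonneg ?_ ?_
  · ext i j
    fin_cases i <;> fin_cases j <;>
      · simp [qubitState, pauli, Matrix.conjTranspose_apply, Fin.sum_univ_three, Complex.ext_iff]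
        try ring
  · intro x
    rw [qubitState_form']
    rw [Complex.zero_le_real]
    set a := x 0; set b := x 1
    have h1 : ((starRingEnd ℂ) a * b).re ^ 2 + ((starRingEnd ℂ) a * b).im ^ 2
        = Complex.normSq a * Complex.normSq b := by
      simp [Complex.normSq_apply, Complex.mul_re, Complex.mul_im]; ring
    have h2 : 0 ≤ Complex.normSq a := Complex.normSq_nonneg a
    have h3 : 0 ≤ Complex.normSq b := Complex.normSq_nonneg b
    have key := real_aux' (θ 0) (θ 1) (θ 2) (2 * ((starRingEnd ℂ) a * b).re)
      (2 * ((starRingEnd ℂ) a * b).im) (Complex.normSq a - Complex.normSq b)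
      (Complex.normSq a + Complex.normSq b) hθ (by nlinarith) (by nlinarith)
    nlinarith

/-- The SLD operator in direction `v`. -/
noncomputable def Lmat (θ v : Fin 3 → ℝ) : Matrix (Fin 2) (Fin 2) ℂ :=
  ((-(v 0 * θ 0 + v 1 * θ 1 + v 2 * θ 2) / (1 - (θ 0 ^ 2 + θ 1 ^ 2 + θ 2 ^ 2)) : ℝ) : ℂ) • 1 +
    ∑ i, ((v i + ((v 0 * θ 0 + v 1 * θ 1 + v 2 * θ 2) / (1 - (θ 0 ^ 2 + θ 1 ^ 2 + θ 2 ^ 2))) * θ i : ℝ) : ℂ) • pauli i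

lemma Lmat_herm (θ v : Fin 3 → ℝ) : (Lmat θ v).IsHermitian := by
  ext i j
  fin_cases i <;> fin_cases j <;>
    · simp [Lmat, pauli, Matrix.conjTranspose_apply, Fin.sum_univ_three, Complex.ext_iff]
      try ring

set_option maxHeartbeats 2000000 in
lemma Lmat_identity (θ v : Fin 3 → ℝ) (hs : (1:ℝ) - (θ 0 ^ 2 + θ 1 ^ 2 + θ 2 ^ 2) ≠ 0) :
    Lmat θ v * qubitState θ + qubitState θ * Lmat θ v = ∑ i, (v i : ℂ) • pauli i := by
  have hs' : ((1:ℂ) - ((θ 0:ℂ) ^ 2 + (θ 1:ℂ) ^ 2 + (θ 2:ℂ) ^ 2)) ≠ 0 := by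
    intro h; apply hs; exact_mod_cast congrArg Complex.re h
  ext i j
  fin_cases i <;> fin_cases j <;>
    · simp [Lmat, qubitState, pauli, Matrix.mul_apply, Fin.sum_univ_two, Fin.sum_univ_three]
      field_simp
      ring_nf
      try (simp only [Complex.I_sq]; ring)

set_option maxHeartbeats 2000000 in
lemma Lmat_trace (θ v : Fin 3 → ℝ) (hs : (1:ℝ) - (θ 0 ^ 2 + θ 1 ^ 2 + θ 2 ^ 2) ≠ 0) :
    (Lmat θ v * qubitState θ * Lmat θ v).trace =
      ((v 0 ^ 2 + v 1 ^ 2 + v 2 ^ 2 +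
        (v 0 * θ 0 + v 1 * θ 1 + v 2 * θ 2) ^ 2 / (1 - (θ 0 ^ 2 + θ 1 ^ 2 + θ 2 ^ 2)) : ℝ) : ℂ) := by
  have hs' : ((1:ℂ) - ((θ 0:ℂ) ^ 2 + (θ 1:ℂ) ^ 2 + (θ 2:ℂ) ^ 2)) ≠ 0 := by
    intro h; apply hs; exact_mod_cast congrArg Complex.re h
  simp [Lmat, qubitState, pauli, Matrix.trace_fin_two, Matrix.mul_apply, Fin.sum_univ_two,
    Fin.sum_univ_three]
  field_simp
  ring_nf
  try (simp only [Complex.I_sq]; ring)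

lemma inv_formula' (θ : Fin 3 → ℝ) (hs : (1:ℝ) - (θ 0 ^ 2 + θ 1 ^ 2 + θ 2 ^ 2) ≠ 0) :
    (1 - Matrix.vecMulVec θ θ)⁻¹ =
      1 + ((1 - (θ 0 ^ 2 + θ 1 ^ 2 + θ 2 ^ 2))⁻¹) • Matrix.vecMulVec θ θ := by
  apply Matrix.inv_eq_right_inv
  ext i j
  fin_cases i <;> fin_cases j <;>
    · simp [Matrix.mul_apply, Matrix.vecMulVec_apply, Matrix.one_apply, Fin.sum_univ_three]
      field_simp
      ring

lemma quad_formula' (θ u : Fin 3 → ℝ) (c : ℝ) :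
    u ⬝ᵥ ((1 + c • Matrix.vecMulVec θ θ) *ᵥ u) =
      (u 0 ^ 2 + u 1 ^ 2 + u 2 ^ 2) + c * (u 0 * θ 0 + u 1 * θ 1 + u 2 * θ 2) ^ 2 := by
  simp [dotProduct, Matrix.mulVec, Matrix.vecMulVec_apply, Matrix.one_apply,
    Fin.sum_univ_three]
  ring

lemma quad_sum' {X : Type} [Fintype X] (u : Fin 3 → ℝ) (a : Fin 3 → X → ℝ) (p : X → ℝ) :
    ∑ i, u i * (∑ j, (∑ x, a i x * a j x / (4 * p x)) * u j)
      = ∑ x, (∑ i, u i * a i x) ^ 2 / (4 * p x) := by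
  simp only [Fin.sum_univ_three, add_mul, mul_add, Finset.mul_sum, Finset.sum_mul,
    ← Finset.sum_add_distrib]
  apply Finset.sum_congr rfl
  intro x _
  by_cases hp : p x = 0
  · simp [hp]
  · field_simp

/-! ### Main theorem -/

/-- (SLD dominance of classical Fisher information for a qubit.) For any POVM `M` on `ℂ²`
with positive outcome probabilities at `θ` (`|θ| < 1`), the classical Fisher information
matrix is dominated by the SLD Fisher information matrix `(I₃ − θθᵗ)⁻¹` in the Loewner
order. -/
theorem sld_dominates_classical_fisher (θ : Fin 3 → ℝ) (hθ : ∑ i, (θ i) ^ 2 < 1)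
    {X : Type} [Fintype X] (M : X → Matrix (Fin 2) (Fin 2) ℂ)
    (hM : ∀ x, (M x).PosSemidef) (hsum : ∑ x : X, M x = 1)
    (hpr : ∀ x, 0 < (qubitState θ * M x).trace.re) :
    ((1 - Matrix.vecMulVec θ θ)⁻¹ - fisher θ M).PosSemidef := by
  have hθ3 : θ 0 ^ 2 + θ 1 ^ 2 + θ 2 ^ 2 < 1 := by
    simpa [Fin.sum_univ_three] using hθ
  have hspos : (0:ℝ) < 1 - (θ 0 ^ 2 + θ 1 ^ 2 + θ 2 ^ 2) := by linarith
  have hs : (1:ℝ) - (θ 0 ^ 2 + θ 1 ^ 2 + θ 2 ^ 2) ≠ 0 := ne_of_gt hspos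
  have hρ : (qubitState θ).PosSemidef := qubitState_psd' θ (le_of_lt hθ3)
  rw [inv_formula' θ hs]
  set c : ℝ := (1 - (θ 0 ^ 2 + θ 1 ^ 2 + θ 2 ^ 2))⁻¹ with hc
  refine Matrix.PosSemidef.of_dotProduct_mulVec_nonneg ?_ ?_
  · -- Hermitian
    apply Matrix.IsHermitian.sub
    · apply Matrix.IsHermitian.add
      · exact Matrix.isHermitian_one
      · ext i j
        simp [Matrix.conjTranspose_apply, Matrix.vecMulVec_apply, mul_comm]
    · ext i j
      simp only [fisher, Matrix.conjTranspose_apply, Matrix.of_apply, star_trivial]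
      apply Finset.sum_congr rfl
      intro x _
      ring
  · intro u'
    have hstar : star u' = u' := star_trivial u'
    rw [hstar, Matrix.sub_mulVec, dotProduct_sub, sub_nonneg]
    -- the SLD operator for direction u'
    set L := Lmat θ u' with hL
    set a : Fin 3 → X → ℝ := fun i x => (pauli i * M x).trace.re with ha
    set p : X → ℝ := fun x => (qubitState θ * M x).trace.re with hp
    -- classical Fisher quadratic form
    have hFq : u' ⬝ᵥ fisher θ M *ᵥ u' = ∑ x, (∑ i, u' i * a i x) ^ 2 / (4 * p x) := by
      rw [← quad_sum' u' a p]
      simp only [dotProduct, Matrix.mulVec, fisher, Matrix.of_apply, ha, hp]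
    -- per-outcome numerator identity
    have hr : ∀ x, ∑ i, u' i * a i x
        = ((L * qubitState θ * M x).trace + (qubitState θ * L * M x).trace).re := by
      intro x
      have h1 : (L * qubitState θ + qubitState θ * L) * M x
          = (∑ i, (u' i : ℂ) • pauli i) * M x := by rw [Lmat_identity θ u' hs]
      have h2 : ((L * qubitState θ + qubitState θ * L) * M x).trace
          = ∑ i, (u' i : ℂ) * (pauli i * M x).trace := by
        rw [h1, Matrix.sum_mul, Matrix.trace_sum]
        apply Finset.sum_congr rfl
        intro i _
        rw [Matrix.smul_mul, Matrix.trace_smul, smul_eq_mul]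
      have h3 := congrArg Complex.re h2
      rw [Matrix.add_mul, Matrix.trace_add] at h3
      rw [h3, Complex.re_sum]
      apply Finset.sum_congr rfl
      intro i _
      simp [Complex.mul_re, ha]
    -- per-outcome Cauchy–Schwarz
    have hcs : ∀ x, (∑ i, u' i * a i x) ^ 2 / (4 * p x)
        ≤ (L * qubitState θ * L * M x).trace.re := by
      intro x
      have hkey := key_cs' hρ (Lmat_herm θ u') (hM x)
      rw [← hr x] at hkey
      have hpx : (0:ℝ) < 4 * p x := by have := hpr x; simp only [hp]; linarith
      rw [div_le_iff₀ hpx]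
      calc (∑ i, u' i * a i x) ^ 2
          ≤ 4 * ((L * qubitState θ * L * M x).trace.re) * p x := hkey
        _ = (L * qubitState θ * L * M x).trace.re * (4 * p x) := by ring
    -- sum of the upper bounds
    have hsumq : ∑ x, (L * qubitState θ * L * M x).trace.re
        = (L * qubitState θ * L).trace.re := by
      rw [← Complex.re_sum, ← Matrix.trace_sum, ← Matrix.mul_sum, hsum, Matrix.mul_one]
    have hJq : u' ⬝ᵥ (1 + c • Matrix.vecMulVec θ θ) *ᵥ u'
        = (L * qubitState θ * L).trace.re := by
      rw [quad_formula', Lmat_trace θ u' hs, Complex.ofReal_re, hc]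
      field_simp
    rw [hFq, hJq, ← hsumq]
    exact Finset.sum_le_sum fun x _ => hcs x
end

section
/- (c-optimality, Theorem 3, matrix form.) Let S be a real symmetric positive definite n×n matrix and let c ∈ ℝⁿ be nonzero. Then for every invertible real symmetric positive semidefinite n×n matrix J with Tr J ≤ 1, one has cᵗ (√S J √S)^{-1} c ≥ cᵗ S^{-1} c, and the infimum of cᵗ (√S J √S)^{-1} c over all such J equals cᵗ S^{-1} c. -/
open Matrix

section helpers
variable {n : ℕ}

lemma psd_trace_nonneg (M : Matrix (Fin n) (Fin n) ℝ) (hM : M.PosSemidef) : 0 ≤ M.trace := by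
  apply Finset.sum_nonneg
  intro i _
  have := hM.dotProduct_mulVec_nonneg (Pi.single i 1)
  simpa [dotProduct, mulVec, Pi.single_apply, Finset.sum_ite_eq, diag] using this

lemma trace_mul_psd_nonneg (A B : Matrix (Fin n) (Fin n) ℝ) (hA : A.PosSemidef)
    (hB : B.PosSemidef) : 0 ≤ (A * B).trace := by
  open scoped MatrixOrder in
  obtain ⟨C, rfl⟩ := CStarAlgebra.nonneg_iff_eq_star_mul_self.mp hB.nonneg
  rw [star_eq_conjTranspose]
  have h1 : A * (Cᴴ * C) = (A * Cᴴ) * C := by rw [Matrix.mul_assoc]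
  rw [h1, Matrix.trace_mul_comm, ← Matrix.mul_assoc]
  exact psd_trace_nonneg _ (hA.mul_mul_conjTranspose_same C)

end helpers
section helpers2
variable {n : ℕ} (d : Fin n → ℝ)

lemma vecMulVec_mulVec (x : Fin n → ℝ) : vecMulVec d d *ᵥ x = (d ⬝ᵥ x) • d := by
  funext i
  simp [mulVec, vecMulVec_apply, dotProduct, Finset.mul_sum, mul_comm, mul_assoc, mul_left_comm]

lemma posSemidef_vecMulVec : (vecMulVec d d).PosSemidef := by
  refine posSemidef_iff_dotProduct_mulVec.mpr ⟨?_, ?_⟩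
  · ext i j
    simp [vecMulVec_apply, mul_comm]
  · intro x
    rw [_root_.vecMulVec_mulVec]
    simp only [star_trivial, dotProduct_smul, smul_eq_mul]
    rw [dotProduct_comm]
    exact mul_self_nonneg _

lemma psd_smul_s5 {M : Matrix (Fin n) (Fin n) ℝ} (hM : M.PosSemidef) {a : ℝ} (ha : 0 ≤ a) :
    (a • M).PosSemidef := by
  refine posSemidef_iff_dotProduct_mulVec.mpr ⟨?_, ?_⟩
  · ext i j
    simp only [conjTranspose_apply, Matrix.smul_apply, smul_eq_mul, star_trivial]
    rw [show M j i = Mᴴ i j from rfl, hM.1]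
  · intro x
    simp only [smul_mulVec, dotProduct_smul, smul_eq_mul]
    exact mul_nonneg ha (by simpa using hM.dotProduct_mulVec_nonneg x)

lemma posDef_smul_one {a : ℝ} (ha : 0 < a) : (a • (1 : Matrix (Fin n) (Fin n) ℝ)).PosDef := by
  rw [Matrix.smul_one_eq_diagonal]
  exact posDef_diagonal_iff.mpr fun _ => ha

end helpers2
section helpers3
variable {n : ℕ}

lemma posDef_of_psd_isUnit {J : Matrix (Fin n) (Fin n) ℝ} (hJ : J.PosSemidef) (hU : IsUnit J) :
    J.PosDef := by
  refine posDef_iff_dotProduct_mulVec.mpr ⟨hJ.1, fun x hx => ?_⟩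
  have h1 : J *ᵥ x ≠ 0 := by
    intro h
    exact hx ((Matrix.mulVec_injective_iff_isUnit.mpr hU).eq_iff.mp (by simpa using h))
  have h2 := hJ.dotProduct_mulVec_nonneg x
  rcases h2.eq_or_lt with h | h
  · exact absurd ((hJ.dotProduct_mulVec_zero_iff x).mp h.symm) h1
  · exact h

lemma trace_vecMulVec (d : Fin n → ℝ) : (vecMulVec d d).trace = d ⬝ᵥ d := by
  simp [Matrix.trace, vecMulVec_apply, dotProduct, Matrix.diag]

lemma vecMulVec_mul_vecMulVec (d : Fin n → ℝ) :
    vecMulVec d d * vecMulVec d d = (d ⬝ᵥ d) • vecMulVec d d := by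
  ext i j
  simp only [mul_apply, vecMulVec_apply, Matrix.smul_apply, smul_eq_mul, dotProduct]
  rw [Finset.sum_mul]
  exact Finset.sum_congr rfl fun k _ => by ring

lemma trace_mul_vecMulVec (J : Matrix (Fin n) (Fin n) ℝ) (d : Fin n → ℝ) :
    (J * vecMulVec d d).trace = d ⬝ᵥ J *ᵥ d := by
  simp only [Matrix.trace, Matrix.diag, mul_apply, vecMulVec_apply, dotProduct, mulVec]
  exact Finset.sum_congr rfl fun k _ => by
    rw [Finset.mul_sum]
    exact Finset.sum_congr rfl fun i _ => by ring

end helpers3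
section helpers4
variable {n : ℕ}

lemma cs_psd (d : Fin n → ℝ) : ((d ⬝ᵥ d) • (1 : Matrix (Fin n) (Fin n) ℝ) - vecMulVec d d).PosSemidef := by
  refine posSemidef_iff_dotProduct_mulVec.mpr ⟨?_, ?_⟩
  · ext i j
    simp only [conjTranspose_apply, Matrix.sub_apply, Matrix.smul_apply, one_apply, vecMulVec_apply,
      star_trivial, smul_eq_mul]
    rw [mul_comm (d j) (d i)]
    congr 1
    simp [eq_comm]
  · intro x
    simp only [star_trivial, sub_mulVec, smul_mulVec, one_mulVec, dotProduct_sub,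
      dotProduct_smul, smul_eq_mul, _root_.vecMulVec_mulVec]
    rw [dotProduct_comm x d]
    have := Finset.sum_mul_sq_le_sq_mul_sq Finset.univ d x
    simp only [dotProduct, ← sq]
    nlinarith [this]

/-- key quadratic bound: dᵀJd ≤ trace J * dᵀd -/
lemma quad_le_trace (J : Matrix (Fin n) (Fin n) ℝ) (hJ : J.PosSemidef) (d : Fin n → ℝ) :
    d ⬝ᵥ J *ᵥ d ≤ J.trace * (d ⬝ᵥ d) := by
  have h := trace_mul_psd_nonneg J _ hJ (cs_psd d)
  rw [Matrix.mul_sub, Matrix.trace_sub, Matrix.mul_smul, Matrix.trace_smul, Matrix.mul_one,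
    trace_mul_vecMulVec] at h
  simp only [smul_eq_mul] at h
  linarith [h]

end helpers4
section mainineq
variable {n : ℕ}

lemma inv_quad_lower (J : Matrix (Fin n) (Fin n) ℝ) (hJ : J.PosDef) (d : Fin n → ℝ) (t : ℝ) :
    2 * t * (d ⬝ᵥ d) - t ^ 2 * (d ⬝ᵥ J *ᵥ d) ≤ d ⬝ᵥ J⁻¹ *ᵥ d := by
  have hdet : IsUnit J.det := (Matrix.isUnit_iff_isUnit_det _).mp hJ.isUnit
  set N : Matrix (Fin n) (Fin n) ℝ := t • 1 - J⁻¹ with hN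
  have hNh : Nᴴ = N := by
    rw [hN, conjTranspose_sub, conjTranspose_smul, conjTranspose_one, hJ.1.inv]
    rfl
  have hexp : Nᴴ * J * N = (t ^ 2) • J - (2 * t) • 1 + J⁻¹ := by
    have h1 : N * J = t • J - 1 := by
      rw [hN, Matrix.sub_mul, Matrix.smul_mul, Matrix.one_mul, Matrix.nonsing_inv_mul _ hdet]
    have h2 : (t • J - 1) * N = t • t • J - t • 1 - (t • 1 - J⁻¹) := by
      rw [hN, Matrix.sub_mul, Matrix.one_mul, Matrix.mul_sub, Matrix.smul_mul, Matrix.mul_smul,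
        Matrix.smul_mul, Matrix.mul_one, Matrix.mul_nonsing_inv _ hdet]
    rw [hNh, h1, h2]
    module
  have hpsd := (hJ.posSemidef.conjTranspose_mul_mul_same N).dotProduct_mulVec_nonneg d
  rw [hexp] at hpsd
  simp only [star_trivial, Matrix.add_mulVec, Matrix.sub_mulVec, smul_mulVec,
    one_mulVec, dotProduct_add, dotProduct_sub, dotProduct_smul, smul_eq_mul] at hpsd
  linarith [hpsd]

lemma main_ineq (J : Matrix (Fin n) (Fin n) ℝ) (hJ : J.PosSemidef) (hU : IsUnit J)
    (htr : J.trace ≤ 1) (d : Fin n → ℝ) : d ⬝ᵥ d ≤ d ⬝ᵥ J⁻¹ *ᵥ d := by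
  have hJd := posDef_of_psd_isUnit hJ hU
  by_cases hd : d = 0
  · simp [hd]
  set p := d ⬝ᵥ d with hp
  set q := d ⬝ᵥ J *ᵥ d with hq
  have hppos : 0 < p := by
    have h0 : (0:ℝ) ≤ p := by simpa using dotProduct_self_star_nonneg d
    rcases h0.eq_or_lt with h | h
    · exact absurd (dotProduct_self_eq_zero.mp h.symm) hd
    · exact h
  have hqpos : 0 < q := by simpa using hJd.dotProduct_mulVec_pos hd
  have hqp : q ≤ p := by
    have := quad_le_trace J hJ d
    nlinarith [hppos]
  have h := inv_quad_lower J hJd d (p / q)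
  have h2 : 2 * (p / q) * p - (p / q) ^ 2 * q = p ^ 2 / q := by
    field_simp
    ring
  rw [h2] at h
  calc p ≤ p ^ 2 / q := by rw [le_div_iff₀ hqpos]; nlinarith
    _ ≤ d ⬝ᵥ J⁻¹ *ᵥ d := h

end mainineq
section transform
variable {n : ℕ}

lemma symm_dot (A : Matrix (Fin n) (Fin n) ℝ) (hA : A.IsHermitian) (v w : Fin n → ℝ) :
    v ⬝ᵥ A *ᵥ w = (A *ᵥ v) ⬝ᵥ w := by
  have hT : Aᵀ = A := by rw [← Matrix.conjTranspose_eq_transpose_of_trivial]; exact hA.eq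
  rw [dotProduct_mulVec, ← Matrix.mulVec_transpose, hT]

lemma transform_eq (R : Matrix (Fin n) (Fin n) ℝ) (hR : R.PosDef)
    (J : Matrix (Fin n) (Fin n) ℝ) (c : Fin n → ℝ) :
    c ⬝ᵥ (R * J * R)⁻¹ *ᵥ c = (R⁻¹ *ᵥ c) ⬝ᵥ J⁻¹ *ᵥ (R⁻¹ *ᵥ c) := by
  rw [Matrix.mul_inv_rev, Matrix.mul_inv_rev, ← Matrix.mulVec_mulVec, ← Matrix.mulVec_mulVec,
    symm_dot _ hR.1.inv]

end transform
section construct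
variable {n : ℕ}

lemma construct_J (d : Fin n → ℝ) (hd : d ≠ 0) (hn : 0 < n) {ε : ℝ} (hε : 0 < ε) (hε2 : ε ≤ 1/2) :
    ∃ J : Matrix (Fin n) (Fin n) ℝ, J.PosSemidef ∧ IsUnit J ∧ J.trace ≤ 1 ∧
      d ⬝ᵥ J⁻¹ *ᵥ d = (d ⬝ᵥ d) / ((1 - ε) + ε / n) := by
  set p := d ⬝ᵥ d with hp
  have hppos : 0 < p := by
    have h0 : (0:ℝ) ≤ p := by simpa using dotProduct_self_star_nonneg d
    rcases h0.eq_or_lt with h | h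
    · exact absurd (dotProduct_self_eq_zero.mp h.symm) hd
    · exact h
  have hncast : (0:ℝ) < (n:ℝ) := by exact_mod_cast hn
  set α : ℝ := (1 - ε) / p with hα_def
  set β : ℝ := ε / n with hβ_def
  have hα : 0 ≤ α := by
    rw [hα_def]
    apply div_nonneg _ hppos.le
    linarith
  have hβ : 0 < β := by rw [hβ_def]; positivity
  set s : ℝ := α * p + β with hs_def
  have hαp : α * p = 1 - ε := by rw [hα_def]; field_simp
  have hs : 0 < s := by
    rw [hs_def, hαp]
    have : (0:ℝ) < 1 - ε := by linarith
    linarith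
  set γ : ℝ := -(α / (β * s)) with hγ_def
  set D : Matrix (Fin n) (Fin n) ℝ := vecMulVec d d with hD
  set J : Matrix (Fin n) (Fin n) ℝ := α • D + β • 1 with hJ
  set K : Matrix (Fin n) (Fin n) ℝ := γ • D + β⁻¹ • 1 with hK
  have hDD : D * D = p • D := vecMulVec_mul_vecMulVec d
  have hJK : J * K = 1 := by
    have hexp : J * K = (α * γ * p + α * β⁻¹ + β * γ) • D + (β * β⁻¹) • 1 := by
      rw [hJ, hK]
      simp only [Matrix.add_mul, Matrix.mul_add, Matrix.smul_mul, Matrix.mul_smul, hDD,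
        Matrix.mul_one, Matrix.one_mul]
      module
    have hco : α * γ * p + α * β⁻¹ + β * γ = 0 := by
      rw [hγ_def]
      field_simp
      ring
    rw [hexp, hco, mul_inv_cancel₀ hβ.ne']
    simp
  have hJpd : J.PosDef := Matrix.PosDef.posSemidef_add
    (psd_smul_s5 (posSemidef_vecMulVec d) hα) (posDef_smul_one hβ)
  have hJU : IsUnit J := hJpd.isUnit
  have hJinv : J⁻¹ = K := Matrix.inv_eq_right_inv hJK
  refine ⟨J, hJpd.posSemidef, hJU, ?_, ?_⟩
  · rw [hJ, Matrix.trace_add, Matrix.trace_smul, Matrix.trace_smul, hD, trace_vecMulVec,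
      Matrix.trace_one]
    simp only [smul_eq_mul, ← hp, hαp, Fintype.card_fin]
    rw [hβ_def]
    rw [div_mul_cancel₀ _ hncast.ne']
    linarith
  · rw [hJinv, hK]
    have hval : d ⬝ᵥ (γ • D + β⁻¹ • 1) *ᵥ d = γ * p ^ 2 + β⁻¹ * p := by
      rw [Matrix.add_mulVec, smul_mulVec, smul_mulVec, one_mulVec, hD,
        _root_.vecMulVec_mulVec, dotProduct_add, dotProduct_smul, dotProduct_smul, dotProduct_smul]
      simp only [smul_eq_mul, ← hp]
      ring
    rw [hval]
    have hsn : 1 - ε + β = s := by rw [hs_def, hαp]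
    rw [hsn, hγ_def]
    field_simp
    ring

end construct


/-- (c-optimality, Theorem 3, matrix form.) For real symmetric positive definite `S` with
`R = √S` and nonzero `c ∈ ℝⁿ`: every invertible real symmetric positive semidefinite `J`
with `Tr J ≤ 1` satisfies `cᵗ (√S J √S)⁻¹ c ≥ cᵗ S⁻¹ c`, and the infimum of these values
equals `cᵗ S⁻¹ c`. -/
theorem c_optimal_design {n : ℕ} (S R : Matrix (Fin n) (Fin n) ℝ)
    (hS : S.PosDef) (hR : R.PosDef) (hRR : R * R = S)
    (c : Fin n → ℝ) (hc : c ≠ 0) :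
    (∀ J : Matrix (Fin n) (Fin n) ℝ, J.PosSemidef → IsUnit J → J.trace ≤ 1 →
      c ⬝ᵥ (R * J * R)⁻¹ *ᵥ c ≥ c ⬝ᵥ S⁻¹ *ᵥ c) ∧
    IsGLB {x : ℝ | ∃ J : Matrix (Fin n) (Fin n) ℝ,
        J.PosSemidef ∧ IsUnit J ∧ J.trace ≤ 1 ∧ x = c ⬝ᵥ (R * J * R)⁻¹ *ᵥ c}
      (c ⬝ᵥ S⁻¹ *ᵥ c) := by
  have hRdet : IsUnit R.det := (Matrix.isUnit_iff_isUnit_det _).mp hR.isUnit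
  set d : Fin n → ℝ := R⁻¹ *ᵥ c with hd_def
  have hSinv : c ⬝ᵥ S⁻¹ *ᵥ c = d ⬝ᵥ d := by
    have h := transform_eq R hR 1 c
    rw [Matrix.mul_one, hRR] at h
    rw [h, inv_one, one_mulVec]
  have part1 : ∀ J : Matrix (Fin n) (Fin n) ℝ, J.PosSemidef → IsUnit J → J.trace ≤ 1 →
      c ⬝ᵥ (R * J * R)⁻¹ *ᵥ c ≥ c ⬝ᵥ S⁻¹ *ᵥ c := by
    intro J hJ hU htr
    rw [transform_eq R hR J c, hSinv]
    exact main_ineq J hJ hU htr d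
  refine ⟨part1, ?_, ?_⟩
  · rintro x ⟨J, h1, h2, h3, rfl⟩
    exact part1 J h1 h2 h3
  · intro w hw
    rw [hSinv]
    set p := d ⬝ᵥ d with hp_def
    have hn : 0 < n := by
      rcases Nat.eq_zero_or_pos n with h | h
      · subst h
        exact absurd (funext fun i => i.elim0) hc
      · exact h
    have hd : d ≠ 0 := by
      intro h
      apply hc
      have : R *ᵥ d = c := by
        rw [hd_def, Matrix.mulVec_mulVec, Matrix.mul_nonsing_inv _ hRdet, one_mulVec]
      rw [← this, h, mulVec_zero]
    have hppos : 0 < p := by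
      have h0 : (0:ℝ) ≤ p := by simpa using dotProduct_self_star_nonneg d
      rcases h0.eq_or_lt with h | h
      · exact absurd (dotProduct_self_eq_zero.mp h.symm) hd
      · exact h
    by_contra hlt
    push_neg at hlt
    have hwpos : 0 < w := hppos.trans hlt
    set ε : ℝ := min (1/2) ((w - p) / (2 * w)) with hε_def
    have hεpos : 0 < ε := by
      apply lt_min (by norm_num)
      apply div_pos (by linarith) (by linarith)
    have hε2 : ε ≤ 1/2 := min_le_left _ _
    have hε3 : ε ≤ (w - p) / (2 * w) := min_le_right _ _
    obtain ⟨J, hJ1, hJ2, hJ3, hJ4⟩ := construct_J d hd hn hεpos hε2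
    have hmem : (d ⬝ᵥ d) / ((1 - ε) + ε / n) ∈ {x : ℝ | ∃ J : Matrix (Fin n) (Fin n) ℝ,
        J.PosSemidef ∧ IsUnit J ∧ J.trace ≤ 1 ∧ x = c ⬝ᵥ (R * J * R)⁻¹ *ᵥ c} := by
      exact ⟨J, hJ1, hJ2, hJ3, by rw [transform_eq R hR J c, hJ4]⟩
    have hwle := hw hmem
    have hncast : (0:ℝ) < (n:ℝ) := by exact_mod_cast hn
    have hεn : 0 ≤ ε / n := by positivity
    have h1ε : (0:ℝ) < 1 - ε := by linarith
    have hs1 : 1 - ε ≤ (1 - ε) + ε / n := by linarith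
    have hv1 : (d ⬝ᵥ d) / ((1 - ε) + ε / n) ≤ p / (1 - ε) := by
      rw [← hp_def]
      exact div_le_div_of_nonneg_left hppos.le h1ε hs1
    have hv2 : p / (1 - ε) < w := by
      rw [div_lt_iff₀ h1ε]
      have hε3' : ε * (2 * w) ≤ w - p := (le_div_iff₀ (by linarith)).mp hε3
      nlinarith
    linarith
end

section
/- (Rank-one Fisher information realized by a projective measurement.) Let θ ∈ ℝ³ with |θ| < 1, set S_θ = (I₃ − θθᵗ)^{-1}, and let u ∈ ℝ³ be a unit vector. Then there exists a two-outcome projective measurement {Π, I₂ − Π} on ℂ² (Π a Hermitian idempotent 2×2 matrix with 0 < tr(ρ_θ Π) < 1) whose classical Fisher information matrix at θ equals the rank-one matrix √S_θ · u uᵗ · √S_θ. -/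
open Matrix Complex
open scoped ComplexOrder

/-- The Bloch projector `(1/2)(I + n·σ)` as an explicit matrix. -/
noncomputable def Pmat (n : Fin 3 → ℝ) : Matrix (Fin 2) (Fin 2) ℂ :=
  !![((1 + n 2)/2 : ℝ), (n 0/2 : ℝ) - (n 1/2 : ℝ)*Complex.I;
     (n 0/2 : ℝ) + (n 1/2 : ℝ)*Complex.I, ((1 - n 2)/2 : ℝ)]

lemma Pmat_herm (n : Fin 3 → ℝ) : (Pmat n).IsHermitian := by
  unfold Matrix.IsHermitian
  ext i j
  fin_cases i <;> fin_cases j <;>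
    simp [Pmat, Matrix.conjTranspose_apply, Complex.ext_iff]

lemma Pmat_idem (n : Fin 3 → ℝ) (hn : n 0^2 + n 1^2 + n 2^2 = 1) :
    Pmat n * Pmat n = Pmat n := by
  ext i j
  fin_cases i <;> fin_cases j <;>
    · simp [Pmat, Matrix.mul_apply, Fin.sum_univ_two, Complex.ext_iff]
      constructor <;> nlinarith [hn]

lemma tr_pauli_Pmat (n : Fin 3 → ℝ) (i : Fin 3) : (pauli i * Pmat n).trace.re = n i := by
  fin_cases i <;>
    simp [Pmat, pauli, Matrix.trace, Matrix.mul_apply, Fin.sum_univ_two, Fin.sum_univ_three] <;>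
    ring

lemma tr_pauli_one_sub_Pmat (n : Fin 3 → ℝ) (i : Fin 3) :
    (pauli i * (1 - Pmat n)).trace.re = - n i := by
  rw [mul_sub, Matrix.mul_one, Matrix.trace_sub, Complex.sub_re, tr_pauli_Pmat]
  have h : (pauli i).trace.re = 0 := by
    fin_cases i <;> simp [pauli, Matrix.trace, Fin.sum_univ_two]
  rw [h]; ring

lemma tr_state_Pmat (θ n : Fin 3 → ℝ) :
    (qubitState θ * Pmat n).trace.re = (1 + (θ 0 * n 0 + θ 1 * n 1 + θ 2 * n 2))/2 := by
  simp [qubitState, Pmat, pauli, Matrix.trace, Matrix.mul_apply, Fin.sum_univ_two,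
    Fin.sum_univ_three, Matrix.one_apply, Matrix.smul_apply, Matrix.add_apply]
  ring

lemma tr_state_one (θ : Fin 3 → ℝ) : (qubitState θ * 1).trace.re = 1 := by
  simp [qubitState, pauli, Matrix.trace, Matrix.mul_apply, Fin.sum_univ_two,
    Fin.sum_univ_three, Matrix.one_apply, Matrix.smul_apply, Matrix.add_apply]
  ring

lemma tr_state_one_sub_Pmat (θ n : Fin 3 → ℝ) :
    (qubitState θ * (1 - Pmat n)).trace.re
      = (1 - (θ 0 * n 0 + θ 1 * n 1 + θ 2 * n 2))/2 := by
  rw [mul_sub, Matrix.trace_sub, Complex.sub_re]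
  rw [tr_state_one, tr_state_Pmat]
  ring

lemma fisher_aux (x y t : ℝ) (h1 : -1 < t) (h2 : t < 1) :
    x * y / (4 * ((1 + t)/2)) + (-x) * (-y) / (4 * ((1 - t)/2)) = x * y / (1 - t^2) := by
  have h1t : (1:ℝ) + t ≠ 0 := by linarith
  have h2t : (1:ℝ) - t ≠ 0 := by linarith
  have h12 : (1:ℝ) - t^2 ≠ 0 := by nlinarith
  field_simp
  ring

set_option maxHeartbeats 1000000 in
/-- (Rank-one Fisher information realized by a projective measurement.) For `|θ| < 1`,
`S_θ = (I₃ − θθᵗ)⁻¹` with positive definite square root `R`, and any unit vector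
`u ∈ ℝ³`, there is a two-outcome projective measurement `{P, I₂ − P}` on `ℂ²` whose
classical Fisher information matrix at `θ` is the rank-one matrix `√S_θ u uᵗ √S_θ`. -/
theorem rank_one_fisher_projective (θ : Fin 3 → ℝ) (hθ : ∑ i, (θ i) ^ 2 < 1)
    (R : Matrix (Fin 3) (Fin 3) ℝ) (hR : R.PosDef)
    (hRR : R * R = (1 - Matrix.vecMulVec θ θ)⁻¹)
    (u : Fin 3 → ℝ) (hu : u ⬝ᵥ u = 1) :
    ∃ P : Matrix (Fin 2) (Fin 2) ℂ, P.IsHermitian ∧ P * P = P ∧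
      0 < (qubitState θ * P).trace.re ∧ (qubitState θ * P).trace.re < 1 ∧
      fisher θ ![P, 1 - P] = R * Matrix.vecMulVec u u * R := by
  -- R (1 - θθᵗ) R = 1
  have hRdet : IsUnit R.det := isUnit_iff_ne_zero.mpr hR.det_pos.ne'
  have hM : R * (1 - Matrix.vecMulVec θ θ) * R = 1 := by
    set A := 1 - Matrix.vecMulVec θ θ with hA
    have hAdet : IsUnit A.det := by
      by_contra h
      have h0 : A⁻¹ = 0 := Matrix.nonsing_inv_apply_not_isUnit A h
      rw [h0] at hRR
      have h1 : R.det * R.det = 0 := by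
        rw [← Matrix.det_mul, hRR, Matrix.det_zero]
      have := hR.det_pos
      nlinarith
    have h1 : (R * R) * A = 1 := by rw [hRR]; exact Matrix.nonsing_inv_mul A hAdet
    have h2 : A = (R * R)⁻¹ := (Matrix.inv_eq_right_inv h1).symm
    rw [h2, Matrix.mul_inv_rev, ← Matrix.mul_assoc, Matrix.mul_nonsing_inv R hRdet,
      Matrix.one_mul, Matrix.nonsing_inv_mul R hRdet]
  have hsT : Rᵀ = R := by
    have := hR.1
    rwa [Matrix.IsHermitian, Matrix.conjTranspose_eq_transpose_of_trivial] at this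
  have hvm : u ᵥ* R = R *ᵥ u := by
    conv_lhs => rw [← hsT]
    rw [Matrix.vecMul_transpose]
  obtain ⟨w, hwdef⟩ : ∃ w : Fin 3 → ℝ, w = R *ᵥ u := ⟨_, rfl⟩
  -- key identity
  have key : w ⬝ᵥ w - (θ ⬝ᵥ w)^2 = 1 := by
    have h0 : u ⬝ᵥ ((R * (1 - Matrix.vecMulVec θ θ) * R) *ᵥ u) = 1 := by
      rw [hM, Matrix.one_mulVec, hu]
    rw [← Matrix.mulVec_mulVec, ← Matrix.mulVec_mulVec, Matrix.dotProduct_mulVec, hvm,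
      ← hwdef, Matrix.sub_mulVec, Matrix.one_mulVec, dotProduct_sub] at h0
    have h1 : w ⬝ᵥ (Matrix.vecMulVec θ θ *ᵥ w) = (θ ⬝ᵥ w)^2 := by
      simp [Matrix.mulVec, dotProduct, Matrix.vecMulVec, Fin.sum_univ_three]
      ring
    rw [h1] at h0
    exact h0
  have hkey : w 0^2 + w 1^2 + w 2^2 - (θ 0 * w 0 + θ 1 * w 1 + θ 2 * w 2)^2 = 1 := by
    simpa [dotProduct, Fin.sum_univ_three, sq] using key
  have hww : (1:ℝ) ≤ w 0^2 + w 1^2 + w 2^2 := by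
    nlinarith [sq_nonneg (θ 0 * w 0 + θ 1 * w 1 + θ 2 * w 2)]
  obtain ⟨c, hc, hc2⟩ : ∃ c : ℝ, 0 < c ∧ c^2 = w 0^2 + w 1^2 + w 2^2 :=
    ⟨Real.sqrt (w 0^2 + w 1^2 + w 2^2), Real.sqrt_pos.mpr (by nlinarith),
      Real.sq_sqrt (by nlinarith)⟩
  obtain ⟨n, hnk⟩ : ∃ n : Fin 3 → ℝ, ∀ k, n k = w k / c := ⟨_, fun _ => rfl⟩
  have hn : n 0^2 + n 1^2 + n 2^2 = 1 := by
    rw [hnk, hnk, hnk]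
    field_simp
    linarith [hc2]
  obtain ⟨t, htdef⟩ : ∃ t : ℝ, t = θ 0 * n 0 + θ 1 * n 1 + θ 2 * n 2 := ⟨_, rfl⟩
  have htc : t * c = θ 0 * w 0 + θ 1 * w 1 + θ 2 * w 2 := by
    rw [htdef, hnk, hnk, hnk]
    field_simp
  have h3 : (t * c)^2 = (θ 0 * w 0 + θ 1 * w 1 + θ 2 * w 2)^2 := by rw [htc]
  have h4 : t^2 * c^2 = c^2 - 1 := by linear_combination h3 - hkey - hc2
  have ht2 : t^2 < 1 := by nlinarith [h4, mul_pos hc hc]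
  have ht1 : -1 < t := by nlinarith [ht2, sq_nonneg (t+1)]
  have ht1' : t < 1 := by nlinarith [ht2, sq_nonneg (t-1)]
  have hden : c^2 * (1 - t^2) = 1 := by linear_combination -h4
  have h1t2 : (1:ℝ) - t^2 ≠ 0 := ne_of_gt (by nlinarith [ht2])
  refine ⟨Pmat n, Pmat_herm n, Pmat_idem n hn, ?_, ?_, ?_⟩
  · rw [tr_state_Pmat, ← htdef]; linarith
  · rw [tr_state_Pmat, ← htdef]; linarith
  · ext i j
    have hRHS : (R * Matrix.vecMulVec u u * R) i j = w i * w j := by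
      have h2 : (R * Matrix.vecMulVec u u * R) i j = (R *ᵥ u) i * (u ᵥ* R) j := by
        simp [Matrix.mul_apply, Matrix.vecMulVec, Matrix.mulVec, Matrix.vecMul,
          dotProduct, Fin.sum_univ_three]
        ring
      rw [h2, hvm, ← hwdef]
    rw [hRHS]
    simp only [fisher, Matrix.of_apply, Fin.sum_univ_two, Matrix.cons_val_zero,
      Matrix.cons_val_one, Matrix.head_cons]
    rw [tr_pauli_Pmat, tr_pauli_Pmat, tr_pauli_one_sub_Pmat, tr_pauli_one_sub_Pmat,
      tr_state_Pmat, tr_state_one_sub_Pmat, ← htdef]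
    rw [fisher_aux (n i) (n j) t ht1 ht1']
    rw [hnk i, hnk j]
    field_simp [hc.ne', h1t2]
    linear_combination (-(w i * w j)) * hden
end

section
/- (E-optimal design, matrix form.) Let S be a real symmetric positive definite n×n matrix. Over all invertible real symmetric positive semidefinite n×n matrices J with Tr J ≤ 1, the minimum of λ_max((√S J √S)^{-1}) (the largest eigenvalue of the inverse Fisher information matrix) equals Tr{S^{-1}}, and J attains the minimum at J = S^{-1} / Tr{S^{-1}}, in which case √S J √S = Iₙ / Tr{S^{-1}}. -/
open Matrix

variable {n : ℕ}

lemma aux_psd_unit_posDef {A : Matrix (Fin n) (Fin n) ℝ} (hA : A.PosSemidef) (hu : IsUnit A) :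
    A.PosDef := by
  refine posDef_iff_dotProduct_mulVec.mpr ⟨hA.1, fun x hx => ?_⟩
  rcases lt_or_eq_of_le (hA.dotProduct_mulVec_nonneg x) with h | h
  · exact h
  · exfalso
    have h0 : A *ᵥ x = 0 := (hA.dotProduct_mulVec_zero_iff x).mp h.symm
    have hinj := (Matrix.mulVec_injective_iff_isUnit (K := ℝ)).mpr hu
    exact hx (by simpa using hinj (h0.trans (Matrix.mulVec_zero A).symm))

lemma aux_trace_nonneg {A : Matrix (Fin n) (Fin n) ℝ} (hA : A.PosSemidef) : 0 ≤ A.trace := by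
  have h : ∀ i, 0 ≤ A i i := by
    intro i
    have := hA.dotProduct_mulVec_nonneg (Pi.single i 1)
    simpa [dotProduct, Matrix.mulVec, Pi.single_apply, Finset.sum_ite_eq] using this
  exact Finset.sum_nonneg fun i _ => h i

lemma aux_trace_mul_nonneg {A B : Matrix (Fin n) (Fin n) ℝ}
    (hA : A.PosSemidef) (hB : B.PosSemidef) : 0 ≤ (A * B).trace := by
  obtain ⟨C, rfl⟩ := (show ∃ C : Matrix (Fin n) (Fin n) ℝ, B = Cᴴ * C by
    open scoped MatrixOrder in exact CStarAlgebra.nonneg_iff_eq_star_mul_self.mp hB.nonneg)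
  have h1 : (A * (Cᴴ * C)).trace = (C * A * Cᴴ).trace := by
    rw [← Matrix.mul_assoc, Matrix.trace_mul_cycle]
  rw [h1]
  exact aux_trace_nonneg (hA.mul_mul_conjTranspose_same C)

lemma aux_sub_smul_psd {M : Matrix (Fin n) (Fin n) ℝ} (hM : M.IsHermitian) {c : ℝ}
    (h : ∀ i, c ≤ hM.eigenvalues i) : (M - c • 1).PosSemidef := by
  set U : Matrix (Fin n) (Fin n) ℝ := ↑(hM.eigenvectorUnitary) with hU
  have hUU : U * star U = 1 := Matrix.mem_unitaryGroup_iff.mp hM.eigenvectorUnitary.2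
  have key : M - c • 1 = U * (Matrix.diagonal (fun i => hM.eigenvalues i - c)) * star U := by
    have hsp : M = U * Matrix.diagonal (RCLike.ofReal ∘ hM.eigenvalues) * star U :=
      hM.spectral_theorem
    have h1 : (c • (1 : Matrix (Fin n) (Fin n) ℝ)) = U * (c • 1) * star U := by
      rw [Matrix.mul_smul, Matrix.mul_one, Matrix.smul_mul, hUU]
    calc M - c • 1 = U * Matrix.diagonal (RCLike.ofReal ∘ hM.eigenvalues) * star U
            - U * (c • 1) * star U := by rw [← hsp, ← h1]
      _ = U * (Matrix.diagonal (RCLike.ofReal ∘ hM.eigenvalues) - c • 1) * star U := by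
            rw [Matrix.mul_sub, Matrix.sub_mul]
      _ = U * (Matrix.diagonal (fun i => hM.eigenvalues i - c)) * star U := by
            congr 1
            congr 1
            ext i j
            rcases eq_or_ne i j with rfl | hij
            · simp
            · simp [Matrix.diagonal_apply_ne _ hij, Matrix.one_apply_ne hij]
  rw [key]
  have hd : (Matrix.diagonal (fun i => hM.eigenvalues i - c)).PosSemidef :=
    Matrix.PosSemidef.diagonal (fun i => by simpa using h i)
  simpa [Matrix.star_eq_conjTranspose] using hd.mul_mul_conjTranspose_same U

/-- (E-optimal design, matrix form.) For real symmetric positive definite `S` with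
`R = √S`, over invertible real symmetric positive semidefinite `J` with `Tr J ≤ 1`, the
minimum of the largest eigenvalue of `(√S J √S)⁻¹` equals `Tr{S⁻¹}`, attained at
`J = S⁻¹ / Tr{S⁻¹}`, in which case `√S J √S = Iₙ / Tr{S⁻¹}`. -/
theorem E_optimal_design {n : ℕ} (hn : 0 < n) (S R : Matrix (Fin n) (Fin n) ℝ)
    (hS : S.PosDef) (hR : R.PosDef) (hRR : R * R = S) :
    IsLeast {x : ℝ | ∃ J : Matrix (Fin n) (Fin n) ℝ,
        J.PosSemidef ∧ IsUnit J ∧ J.trace ≤ 1 ∧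
          x = sSup (spectrum ℝ ((R * J * R)⁻¹))}
      ((S⁻¹).trace) ∧
    (((S⁻¹).trace)⁻¹ • S⁻¹ : Matrix (Fin n) (Fin n) ℝ).PosSemidef ∧
    IsUnit (((S⁻¹).trace)⁻¹ • S⁻¹ : Matrix (Fin n) (Fin n) ℝ) ∧
    (((S⁻¹).trace)⁻¹ • S⁻¹ : Matrix (Fin n) (Fin n) ℝ).trace ≤ 1 ∧
    sSup (spectrum ℝ ((R * (((S⁻¹).trace)⁻¹ • S⁻¹) * R)⁻¹)) = (S⁻¹).trace ∧
    R * (((S⁻¹).trace)⁻¹ • S⁻¹) * R = ((S⁻¹).trace)⁻¹ • 1 := by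
  haveI : Nonempty (Fin n) := ⟨⟨0, hn⟩⟩
  have hSinv : (S⁻¹).PosDef := hS.inv
  set t : ℝ := (S⁻¹).trace with ht_def
  have hdiag : ∀ i, 0 < S⁻¹ i i := fun i => by
    have hne : (Pi.single i 1 : Fin n → ℝ) ≠ 0 := fun h => by simpa using congrFun h i
    have := hSinv.dotProduct_mulVec_pos hne
    simpa [dotProduct, Matrix.mulVec, Pi.single_apply, Finset.sum_ite_eq] using this
  have ht : 0 < t := by
    rw [ht_def]
    simp only [Matrix.trace, Matrix.diag]
    exact Finset.sum_pos (fun i _ => hdiag i) Finset.univ_nonempty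
  have hRdet : IsUnit R.det := (Matrix.isUnit_iff_isUnit_det R).mp hR.isUnit
  have h1 : R * S⁻¹ * R = 1 := by
    rw [← hRR, Matrix.mul_inv_rev]
    simp only [Matrix.mul_assoc]
    rw [Matrix.nonsing_inv_mul R hRdet, Matrix.mul_one, Matrix.mul_nonsing_inv R hRdet]
  have h2 : R * (t⁻¹ • S⁻¹) * R = t⁻¹ • (1 : Matrix (Fin n) (Fin n) ℝ) := by
    rw [Matrix.mul_smul, Matrix.smul_mul, h1]
  have h3 : (t⁻¹ • (1 : Matrix (Fin n) (Fin n) ℝ))⁻¹ = t • 1 := by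
    apply Matrix.inv_eq_right_inv
    rw [Matrix.smul_mul, Matrix.one_mul, smul_smul, inv_mul_cancel₀ ht.ne', one_smul]
  have hspec : spectrum ℝ (t • (1 : Matrix (Fin n) (Fin n) ℝ)) = {t} := by
    rw [← Algebra.algebraMap_eq_smul_one]
    exact spectrum.scalar_eq t
  have hsup0 : sSup (spectrum ℝ ((R * (t⁻¹ • S⁻¹) * R)⁻¹)) = t := by
    rw [h2, h3, hspec, csSup_singleton]
  have hJ0pd : (t⁻¹ • S⁻¹ : Matrix (Fin n) (Fin n) ℝ).PosDef := by
    refine posDef_iff_dotProduct_mulVec.mpr ⟨?_, fun x hx => ?_⟩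
    · show (t⁻¹ • S⁻¹)ᴴ = _
      rw [Matrix.conjTranspose_smul, star_trivial, hSinv.1.eq]
    · have h := hSinv.dotProduct_mulVec_pos hx
      rw [Matrix.smul_mulVec, dotProduct_smul, smul_eq_mul]
      exact mul_pos (inv_pos.mpr ht) h
  have hJ0unit : IsUnit (t⁻¹ • S⁻¹ : Matrix (Fin n) (Fin n) ℝ) := hJ0pd.isUnit
  have hJ0tr : (t⁻¹ • S⁻¹ : Matrix (Fin n) (Fin n) ℝ).trace ≤ 1 := by
    rw [Matrix.trace_smul, smul_eq_mul, ← ht_def, inv_mul_cancel₀ ht.ne']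
  have hlb : ∀ x ∈ {x : ℝ | ∃ J : Matrix (Fin n) (Fin n) ℝ,
      J.PosSemidef ∧ IsUnit J ∧ J.trace ≤ 1 ∧
        x = sSup (spectrum ℝ ((R * J * R)⁻¹))}, t ≤ x := by
    rintro x ⟨J, hJpsd, hJu, hJtr, rfl⟩
    set M := R * J * R with hM_def
    have hMpsd : M.PosSemidef := by
      have := hJpsd.mul_mul_conjTranspose_same R
      rwa [hR.1.eq] at this
    have hMunit : IsUnit M := (hR.isUnit.mul hJu).mul hR.isUnit
    have hMpd : M.PosDef := aux_psd_unit_posDef hMpsd hMunit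
    obtain ⟨i₀, -, hi₀⟩ := Finset.exists_min_image Finset.univ hMpd.1.eigenvalues
      ⟨Classical.arbitrary _, Finset.mem_univ _⟩
    set lam := hMpd.1.eigenvalues i₀ with hlam_def
    have hlam : 0 < lam := hMpd.eigenvalues_pos i₀
    have hsub : (M - lam • 1).PosSemidef :=
      aux_sub_smul_psd hMpd.1 (fun i => hi₀ i (Finset.mem_univ i))
    have htr1 : (M * S⁻¹).trace = J.trace := by
      calc (R * J * R * S⁻¹).trace = ((R * J) * (R * S⁻¹)).trace := by rw [Matrix.mul_assoc]
        _ = ((R * S⁻¹) * (R * J)).trace := Matrix.trace_mul_comm _ _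
        _ = ((R * S⁻¹ * R) * J).trace := by simp only [Matrix.mul_assoc]
        _ = J.trace := by rw [h1, Matrix.one_mul]
    have hineq : lam * t ≤ 1 := by
      have h4 : 0 ≤ ((M - lam • 1) * S⁻¹).trace := aux_trace_mul_nonneg hsub hSinv.posSemidef
      rw [Matrix.sub_mul, Matrix.trace_sub, Matrix.smul_mul, Matrix.one_mul,
        Matrix.trace_smul, htr1, sub_nonneg, smul_eq_mul] at h4
      calc lam * t ≤ J.trace := h4
        _ ≤ 1 := hJtr
    have hle : t ≤ lam⁻¹ := by
      rw [← one_div, le_div_iff₀ hlam]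
      linarith [hineq]
    have hmem : lam ∈ spectrum ℝ M := hMpd.1.eigenvalues_mem_spectrum_real i₀
    have hmem' : lam⁻¹ ∈ spectrum ℝ M⁻¹ := by
      set u : ℝˣ := Units.mk0 lam hlam.ne' with hu_def
      have h5 : ((u : ℝ)) ∈ spectrum ℝ ((hMunit.unit : (Matrix (Fin n) (Fin n) ℝ)ˣ) :
          Matrix (Fin n) (Fin n) ℝ) := by rwa [hMunit.unit_spec]
      have h6 := spectrum.inv_mem_iff.mp h5
      rwa [Matrix.coe_units_inv, hMunit.unit_spec, Units.val_inv_eq_inv_val, Units.val_mk0] at h6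
    have hbdd : BddAbove (spectrum ℝ (M⁻¹)) := (Matrix.finite_real_spectrum).bddAbove
    exact hle.trans (le_csSup hbdd hmem')
  exact ⟨⟨⟨t⁻¹ • S⁻¹, hJ0pd.posSemidef, hJ0unit, hJ0tr, hsup0.symm⟩, hlb⟩,
    hJ0pd.posSemidef, hJ0unit, hJ0tr, hsup0, h2⟩
end

section
/- (Quantum equivalence theorem for a qubit, matrix form.) Let S be a real symmetric positive definite n×n matrix and let K range over the set {√S J √S : J real symmetric positive semidefinite, invertible, Tr J ≤ 1}. Then: (i) det(K^{-1}) ≥ nⁿ det(S^{-1}) with equality if and only if K = S/n; (ii) Tr{S K^{-1}} ≥ n² with equality if and only if K = S/n. Consequently the D-optimality function det(K^{-1}) and the A-optimality function with weight matrix S, Tr{S K^{-1}}, are minimized at exactly the same point K = S/n. -/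
open Matrix


open Finset in
lemma my_amgm {n : ℕ} (hn : 0 < n) (lam : Fin n → ℝ) (hpos : ∀ i, 0 < lam i)
    (hsum : ∑ i, lam i ≤ 1) :
    ∏ i, lam i ≤ ((n:ℝ)⁻¹)^n ∧ (∏ i, lam i = ((n:ℝ)⁻¹)^n ↔ ∀ i, lam i = (n:ℝ)⁻¹) := by
  have hn' : (0:ℝ) < n := by exact_mod_cast hn
  have key : ∀ i : Fin n, Real.log (lam i) ≤ (n:ℝ) * lam i - 1 - Real.log n := by
    intro i
    have h1 : Real.log ((n:ℝ) * lam i) ≤ (n:ℝ) * lam i - 1 :=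
      Real.log_le_sub_one_of_pos (mul_pos hn' (hpos i))
    rw [Real.log_mul (ne_of_gt hn') (ne_of_gt (hpos i))] at h1
    linarith
  have hsg : ∑ i : Fin n, ((n:ℝ) * lam i - 1 - Real.log n)
      = (n:ℝ) * (∑ i, lam i) - n - n * Real.log n := by
    simp [Finset.sum_sub_distrib, Finset.sum_mul, ← Finset.mul_sum, Finset.card_univ, mul_comm]
  have hgle : ∑ i : Fin n, ((n:ℝ) * lam i - 1 - Real.log n) ≤ (n:ℝ) * Real.log (n:ℝ)⁻¹ := by
    rw [hsg, Real.log_inv]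
    nlinarith
  have hfg : ∑ i, Real.log (lam i) ≤ ∑ i : Fin n, ((n:ℝ) * lam i - 1 - Real.log n) :=
    Finset.sum_le_sum fun i _ => key i
  have hsumlog : ∑ i, Real.log (lam i) ≤ (n:ℝ) * Real.log (n:ℝ)⁻¹ := hfg.trans hgle
  have hprodexp : ∏ i, lam i = Real.exp (∑ i, Real.log (lam i)) := by
    rw [Real.exp_sum]; exact Finset.prod_congr rfl fun i _ => (Real.exp_log (hpos i)).symm
  have htarget : ((n:ℝ)⁻¹)^n = Real.exp ((n:ℝ) * Real.log (n:ℝ)⁻¹) := by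
    rw [Real.exp_nat_mul, Real.exp_log (by positivity)]
  refine ⟨by rw [hprodexp, htarget]; exact Real.exp_le_exp.mpr hsumlog, ?_, ?_⟩
  · intro he
    rw [hprodexp, htarget] at he
    have hlogeq : ∑ i, Real.log (lam i) = (n:ℝ) * Real.log (n:ℝ)⁻¹ := Real.exp_injective he
    have heq2 : ∑ i, Real.log (lam i) = ∑ i : Fin n, ((n:ℝ) * lam i - 1 - Real.log n) :=
      le_antisymm hfg (by rw [hlogeq]; exact hgle)
    have hpt := (Finset.sum_eq_sum_iff_of_le (fun i _ => key i)).mp heq2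
    intro i
    have hi := hpt i (Finset.mem_univ i)
    by_contra hne
    have hne1 : (n:ℝ) * lam i ≠ 1 := fun h => hne (eq_inv_of_mul_eq_one_left (by linarith [h] : lam i * (n:ℝ) = 1))
    have := Real.log_lt_sub_one_of_pos (mul_pos hn' (hpos i)) hne1
    rw [Real.log_mul (ne_of_gt hn') (ne_of_gt (hpos i))] at this
    linarith
  · intro h
    rw [Finset.prod_congr rfl (fun i _ => h i), Finset.prod_const, Finset.card_univ,
      Fintype.card_fin]

lemma my_amhm {n : ℕ} (hn : 0 < n) (lam : Fin n → ℝ) (hpos : ∀ i, 0 < lam i)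
    (hsum : ∑ i, lam i ≤ 1) :
    (n:ℝ)^2 ≤ ∑ i, (lam i)⁻¹ ∧ (∑ i, (lam i)⁻¹ = (n:ℝ)^2 ↔ ∀ i, lam i = (n:ℝ)⁻¹) := by
  have hn' : (0:ℝ) < n := by exact_mod_cast hn
  have key : ∀ i : Fin n, 2*(n:ℝ) - (n:ℝ)^2 * lam i ≤ (lam i)⁻¹ := by
    intro i
    rw [← one_div, le_div_iff₀ (hpos i)]
    nlinarith [sq_nonneg (1 - (n:ℝ) * lam i)]
  have hsg : ∑ i : Fin n, (2*(n:ℝ) - (n:ℝ)^2 * lam i)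
      = 2*(n:ℝ)*n - (n:ℝ)^2 * (∑ i, lam i) := by
    simp [Finset.sum_sub_distrib, ← Finset.mul_sum, Finset.card_univ]
    ring
  have hgle : (n:ℝ)^2 ≤ ∑ i : Fin n, (2*(n:ℝ) - (n:ℝ)^2 * lam i) := by
    rw [hsg]; nlinarith
  have hfg : ∑ i : Fin n, (2*(n:ℝ) - (n:ℝ)^2 * lam i) ≤ ∑ i, (lam i)⁻¹ :=
    Finset.sum_le_sum fun i _ => key i
  refine ⟨hgle.trans hfg, ?_, ?_⟩
  · intro he
    have heq2 : ∑ i : Fin n, (2*(n:ℝ) - (n:ℝ)^2 * lam i) = ∑ i, (lam i)⁻¹ :=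
      le_antisymm hfg (by rw [he]; exact hgle)
    have hpt := (Finset.sum_eq_sum_iff_of_le (fun i _ => key i)).mp heq2
    intro i
    have hi := (hpt i (Finset.mem_univ i)).symm
    have h1 : (2*(n:ℝ) - (n:ℝ)^2 * lam i) * lam i = 1 := by
      rw [← hi]; exact inv_mul_cancel₀ (ne_of_gt (hpos i))
    have h2 : ((n:ℝ) * lam i - 1)^2 = 0 := by nlinarith
    have h3 : lam i * (n:ℝ) = 1 := by nlinarith [sq_nonneg ((n:ℝ)*lam i - 1)]
    exact eq_inv_of_mul_eq_one_left h3
  · intro h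
    rw [Finset.sum_congr rfl (fun i _ => by rw [h i])]
    simp [Finset.card_univ]
    ring

/-- (Quantum equivalence theorem for a qubit, matrix form.) For real symmetric positive
definite `S` with `R = √S`, and `K = √S J √S` ranging over invertible real symmetric
positive semidefinite `J` with `Tr J ≤ 1`: (i) `det(K⁻¹) ≥ nⁿ det(S⁻¹)` with equality iff
`K = S/n`; (ii) `Tr{S K⁻¹} ≥ n²` with equality iff `K = S/n`. Hence the D-optimality
function and the A-optimality function with weight `S` are minimized at the same `K`. -/
theorem quantum_equivalence_theorem {n : ℕ} (hn : 0 < n)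
    (S R : Matrix (Fin n) (Fin n) ℝ)
    (hS : S.PosDef) (hR : R.PosDef) (hRR : R * R = S) :
    ∀ J : Matrix (Fin n) (Fin n) ℝ, J.PosSemidef → IsUnit J → J.trace ≤ 1 →
      (((R * J * R)⁻¹).det ≥ (n : ℝ) ^ n * (S⁻¹).det ∧
        (((R * J * R)⁻¹).det = (n : ℝ) ^ n * (S⁻¹).det ↔
          R * J * R = (n : ℝ)⁻¹ • S)) ∧
      ((S * (R * J * R)⁻¹).trace ≥ (n : ℝ) ^ 2 ∧
        ((S * (R * J * R)⁻¹).trace = (n : ℝ) ^ 2 ↔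
          R * J * R = (n : ℝ)⁻¹ • S)) := by
  intro J hJpsd hJu hJtr
  classical
  have hn' : (0:ℝ) < n := by exact_mod_cast hn
  set lam : Fin n → ℝ := hJpsd.1.eigenvalues with hlamdef
  set U : Matrix (Fin n) (Fin n) ℝ := (hJpsd.1.eigenvectorUnitary : Matrix (Fin n) (Fin n) ℝ) with hUdef
  have hco : (RCLike.ofReal ∘ lam : Fin n → ℝ) = lam := rfl
  have hspec : J = U * Matrix.diagonal lam * star U := by
    have h := hJpsd.1.spectral_theorem
    rwa [hco] at h
  have hUU : U * star U = 1 := mem_unitaryGroup_iff.mp hJpsd.1.eigenvectorUnitary.2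
  have hUU' : star U * U = 1 := mem_unitaryGroup_iff'.mp hJpsd.1.eigenvectorUnitary.2
  have hdetJ : J.det = ∏ i, lam i := by
    simpa using hJpsd.1.det_eq_prod_eigenvalues
  have hdetJ0 : J.det ≠ 0 := ((Matrix.isUnit_iff_isUnit_det J).mp hJu).ne_zero
  have hpos : ∀ i, 0 < lam i := by
    intro i
    rcases lt_or_eq_of_le (hJpsd.eigenvalues_nonneg i) with h | h
    · exact h
    · exfalso
      apply hdetJ0
      rw [hdetJ]
      exact Finset.prod_eq_zero (Finset.mem_univ i) h.symm
  have htr : J.trace = ∑ i, lam i := by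
    rw [hspec, Matrix.trace_mul_comm, ← Matrix.mul_assoc, hUU', Matrix.one_mul,
      Matrix.trace_diagonal]
  have hsum : ∑ i, lam i ≤ 1 := by rw [← htr]; exact hJtr
  have amgm := my_amgm hn lam hpos hsum
  have amhm := my_amhm hn lam hpos hsum
  have hRdet : IsUnit R.det := (Matrix.isUnit_iff_isUnit_det R).mp hR.isUnit
  have hRR1 : R * R⁻¹ = 1 := Matrix.mul_nonsing_inv R hRdet
  have hR1R : R⁻¹ * R = 1 := Matrix.nonsing_inv_mul R hRdet
  have hdetS : 0 < S.det := hS.det_pos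
  have hdetJpos : 0 < J.det := by rw [hdetJ]; exact Finset.prod_pos fun i _ => hpos i
  have hdetK : (R * J * R).det = S.det * J.det := by
    rw [Matrix.det_mul, Matrix.det_mul, ← hRR, Matrix.det_mul]; ring
  have hdetKinv : ((R * J * R)⁻¹).det = (S.det * J.det)⁻¹ := by
    rw [Matrix.det_nonsing_inv, hdetK, Ring.inverse_eq_inv]
  have hdetSinv : (S⁻¹).det = (S.det)⁻¹ := by
    rw [Matrix.det_nonsing_inv, Ring.inverse_eq_inv]
  -- central iff
  have hKiff : R * J * R = (n:ℝ)⁻¹ • S ↔ ∀ i, lam i = (n:ℝ)⁻¹ := by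
    constructor
    · intro h
      have hdK : (R * J * R).det = ((n:ℝ)⁻¹)^n * S.det := by
        rw [h, Matrix.det_smul]
        simp
      rw [hdetK] at hdK
      have : J.det = ((n:ℝ)⁻¹)^n := by
        have h2 : S.det * J.det = S.det * ((n:ℝ)⁻¹)^n := by rw [hdK]; ring
        exact mul_left_cancel₀ (ne_of_gt hdetS) h2
      exact amgm.2.mp (by rw [← hdetJ]; exact this)
    · intro h
      have hD : Matrix.diagonal lam = (n:ℝ)⁻¹ • (1 : Matrix (Fin n) (Fin n) ℝ) := by
        rw [funext h]
        ext i j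
        by_cases hij : i = j <;> simp [Matrix.diagonal, Matrix.one_apply, hij]
      have hJ1 : J = (n:ℝ)⁻¹ • (1 : Matrix (Fin n) (Fin n) ℝ) := by
        rw [hspec, hD, Matrix.mul_smul, Matrix.smul_mul, Matrix.mul_one, hUU]
      rw [hJ1, Matrix.mul_smul, Matrix.smul_mul, Matrix.mul_one, hRR]
  -- part (i)
  have hJdle : J.det ≤ ((n:ℝ)⁻¹)^n := by rw [hdetJ]; exact amgm.1
  have hinvle : ((n:ℝ))^n ≤ (J.det)⁻¹ := by
    have h2 : (((n:ℝ)⁻¹)^n)⁻¹ ≤ (J.det)⁻¹ := by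
      exact inv_anti₀ hdetJpos hJdle
    simpa [inv_pow] using h2
  have part1a : ((R * J * R)⁻¹).det ≥ (n : ℝ) ^ n * (S⁻¹).det := by
    rw [hdetKinv, hdetSinv, ge_iff_le, mul_inv]
    calc (n:ℝ)^n * (S.det)⁻¹ = (S.det)⁻¹ * (n:ℝ)^n := mul_comm _ _
    _ ≤ (S.det)⁻¹ * (J.det)⁻¹ := by
        apply mul_le_mul_of_nonneg_left hinvle (by positivity)
  have part1b : ((R * J * R)⁻¹).det = (n : ℝ) ^ n * (S⁻¹).det ↔
      R * J * R = (n : ℝ)⁻¹ • S := by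
    rw [hdetKinv, hdetSinv, hKiff]
    constructor
    · intro he
      apply amgm.2.mp
      rw [← hdetJ]
      have hSd : S.det ≠ 0 := ne_of_gt hdetS
      have h3 : (J.det)⁻¹ = (n:ℝ)^n := by
        have h5 : (S.det)⁻¹ * (J.det)⁻¹ = (S.det)⁻¹ * (n:ℝ)^n := by
          rw [mul_inv] at he; rw [he]; ring
        exact mul_left_cancel₀ (inv_ne_zero hSd) h5
      rw [← inv_inv J.det, h3, ← inv_pow]
    · intro h
      have : J.det = ((n:ℝ)⁻¹)^n := by rw [hdetJ]; exact amgm.2.mpr h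
      rw [this, mul_inv, inv_pow, inv_inv]
      ring
  -- part (ii)
  have hKinv : (R * J * R)⁻¹ = R⁻¹ * J⁻¹ * R⁻¹ := by
    rw [Matrix.mul_inv_rev, Matrix.mul_inv_rev, ← Matrix.mul_assoc]
  have hUinv : U⁻¹ = star U := Matrix.inv_eq_right_inv hUU
  have hsUinv : (star U)⁻¹ = U := Matrix.inv_eq_right_inv hUU'
  have hDinv : (Matrix.diagonal lam)⁻¹ = Matrix.diagonal (fun i => (lam i)⁻¹) := by
    apply Matrix.inv_eq_right_inv
    rw [Matrix.diagonal_mul_diagonal]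
    have h6 : (fun i => lam i * (lam i)⁻¹) = fun _ : Fin n => (1:ℝ) :=
      funext fun i => mul_inv_cancel₀ (ne_of_gt (hpos i))
    rw [h6, Matrix.diagonal_one]
  have hJinv : J⁻¹ = U * Matrix.diagonal (fun i => (lam i)⁻¹) * star U := by
    rw [hspec, Matrix.mul_inv_rev, Matrix.mul_inv_rev, hUinv, hsUinv, hDinv,
      ← Matrix.mul_assoc]
  have htrJinv : J⁻¹.trace = ∑ i, (lam i)⁻¹ := by
    rw [hJinv, Matrix.trace_mul_comm, ← Matrix.mul_assoc, hUU', Matrix.one_mul,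
      Matrix.trace_diagonal]
  have hSK : S * (R * J * R)⁻¹ = R * J⁻¹ * R⁻¹ := by
    rw [hKinv, ← hRR, Matrix.mul_assoc R⁻¹ J⁻¹ R⁻¹, ← Matrix.mul_assoc (R * R) R⁻¹,
      Matrix.mul_assoc R R R⁻¹, hRR1, Matrix.mul_one, ← Matrix.mul_assoc]
  have htrSK : (S * (R * J * R)⁻¹).trace = ∑ i, (lam i)⁻¹ := by
    rw [hSK, Matrix.trace_mul_comm, ← Matrix.mul_assoc, hR1R, Matrix.one_mul, htrJinv]
  refine ⟨⟨part1a, part1b⟩, ?_, ?_⟩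
  · rw [ge_iff_le, htrSK]; exact amhm.1
  · rw [htrSK, hKiff]; exact amhm.2
end

section
/- (A-optimal Holevo–Nagaoka bound, matrix lemma.) Let Z be an n×n complex Hermitian positive semidefinite matrix, and write Z = Re Z + i·Im Z where Re Z is a real symmetric matrix and Im Z is a real skew-symmetric matrix. Then the minimum of Tr V over all real symmetric n×n matrices V satisfying V ≥ Z in the Loewner order (of complex Hermitian matrices) equals Tr{Re Z} + Tr{|Im Z|}, where |Im Z| = √((Im Z)ᵗ (Im Z)), i.e. Tr{|Im Z|} is the sum of the singular values of Im Z. -/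
open Matrix
open scoped ComplexOrder

lemma psd_diag {n : ℕ} {M : Matrix (Fin n) (Fin n) ℂ} (hM : M.PosSemidef) (k : Fin n) :
    0 ≤ M k k := by
  exact hM.diag_nonneg

lemma key {n : ℕ} (H : Matrix (Fin n) (Fin n) ℂ) (hH : H.IsHermitian) :
    ∃ A : Matrix (Fin n) (Fin n) ℂ, A.PosSemidef ∧ A ^ 2 = H ^ 2 ∧ (A - H).PosSemidef ∧
      ∀ W : Matrix (Fin n) (Fin n) ℂ, (W - H).PosSemidef → (W + H).PosSemidef →
        A.trace.re ≤ W.trace.re := by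
  classical
  set U : Matrix (Fin n) (Fin n) ℂ := (hH.eigenvectorUnitary : Matrix (Fin n) (Fin n) ℂ) with hU
  have h1 : star U * U = 1 := Unitary.coe_star_mul_self hH.eigenvectorUnitary
  have h2 : U * star U = 1 := Unitary.coe_mul_star_self hH.eigenvectorUnitary
  set lam := hH.eigenvalues with hlam
  set Dabs : Matrix (Fin n) (Fin n) ℂ := diagonal (fun i => Complex.ofReal |lam i|) with hDabs
  set D : Matrix (Fin n) (Fin n) ℂ := diagonal (RCLike.ofReal ∘ lam) with hD
  have hDiag : star U * H * U = D := by
    exact (by simpa using hH.conjStarAlgAut_star_eigenvectorUnitary :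
      star (hH.eigenvectorUnitary : Matrix (Fin n) (Fin n) ℂ) * H * (hH.eigenvectorUnitary : Matrix (Fin n) (Fin n) ℂ) =
        diagonal (RCLike.ofReal ∘ hH.eigenvalues))
  have hspec : H = U * D * star U := by
    exact (by simpa using hH.spectral_theorem : H = (hH.eigenvectorUnitary : Matrix (Fin n) (Fin n) ℂ) *
      diagonal (RCLike.ofReal ∘ hH.eigenvalues) * star (hH.eigenvectorUnitary : Matrix (Fin n) (Fin n) ℂ))
  have assoc : ∀ P Q : Matrix (Fin n) (Fin n) ℂ,
      (U * P * star U) * (U * Q * star U) = U * (P * Q) * star U := by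
    intro P Q
    calc (U * P * star U) * (U * Q * star U) = U * (P * ((star U * U) * Q)) * star U := by
          noncomm_ring
      _ = U * (P * Q) * star U := by rw [h1, one_mul]
  refine ⟨U * Dabs * star U, ?_, ?_, ?_, ?_⟩
  · have : Dabs.PosSemidef := posSemidef_diagonal_iff.mpr fun i =>
      Complex.zero_le_real.mpr (abs_nonneg (lam i))
    simpa [Matrix.star_eq_conjTranspose] using this.mul_mul_conjTranspose_same U
  · have hsq : Dabs * Dabs = D * D := by
      rw [hDabs, hD, diagonal_mul_diagonal, diagonal_mul_diagonal]
      congr! 1 with i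
      simp [← Complex.ofReal_mul, abs_mul_abs_self]
    rw [pow_two, pow_two, assoc, hspec, assoc, hsq]
  · have : U * Dabs * star U - H = U * (Dabs - D) * star U := by
      rw [hspec]; noncomm_ring
    rw [this]
    have hpsd : (Dabs - D).PosSemidef := by
      rw [hDabs, hD, diagonal_sub]
      refine posSemidef_diagonal_iff.mpr fun i => ?_
      have : (Complex.ofReal |lam i| - (RCLike.ofReal ∘ lam) i)
          = Complex.ofReal (|lam i| - lam i) := by push_cast; simp
      rw [this]
      exact Complex.zero_le_real.mpr (by simp [le_abs_self])
    simpa [Matrix.star_eq_conjTranspose] using hpsd.mul_mul_conjTranspose_same U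
  · intro W hW1 hW2
    set M : Matrix (Fin n) (Fin n) ℂ := star U * W * U with hM
    have htrW : M.trace = W.trace := by
      rw [hM, Matrix.trace_mul_cycle, h2, one_mul]
    have htrA : (U * Dabs * star U).trace = Complex.ofReal (∑ i, |lam i|) := by
      rw [Matrix.trace_mul_cycle, h1, one_mul, hDabs, trace_diagonal]
      push_cast; rfl
    have hk : ∀ k, |lam k| ≤ (M k k).re := by
      intro k
      have p1 : (star U * (W - H) * U).PosSemidef := by
        simpa [Matrix.star_eq_conjTranspose] using hW1.conjTranspose_mul_mul_same U
      have p2 : (star U * (W + H) * U).PosSemidef := by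
        simpa [Matrix.star_eq_conjTranspose] using hW2.conjTranspose_mul_mul_same U
      have e1 : star U * (W - H) * U = M - D := by rw [← hDiag, hM]; noncomm_ring
      have e2 : star U * (W + H) * U = M + D := by rw [← hDiag, hM]; noncomm_ring
      have q1 := psd_diag (e1 ▸ p1) k
      have q2 := psd_diag (e2 ▸ p2) k
      rw [Complex.le_def] at q1 q2
      simp [hD, Complex.sub_re, Complex.add_re, RCLike.ofReal_re] at q1 q2
      rw [abs_le]
      constructor
      · linarith [q2.1]
      · linarith [q1.1]
    calc (U * Dabs * star U).trace.re = ∑ i, |lam i| := by rw [htrA, Complex.ofReal_re]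
      _ ≤ ∑ i, (M i i).re := Finset.sum_le_sum fun i _ => hk i
      _ = W.trace.re := by rw [← htrW]; simp [Matrix.trace, Matrix.diag, Complex.re_sum]

/-- (A-optimal Holevo–Nagaoka bound, matrix lemma.) Let `Z` be a complex Hermitian
positive semidefinite matrix with real part `Re Z` (real symmetric) and imaginary part
`Im Z` (real skew-symmetric), and let `B = |Im Z| = √((Im Z)ᵗ (Im Z))` be the positive
semidefinite square root. Then the minimum of `Tr V` over real symmetric `V` with
`V ≥ Z` in the Loewner order equals `Tr{Re Z} + Tr{|Im Z|}`. -/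
theorem holevo_nagaoka_matrix_lemma {n : ℕ} (Z : Matrix (Fin n) (Fin n) ℂ)
    (hZ : Z.PosSemidef) :
    ∀ B : Matrix (Fin n) (Fin n) ℝ, B.PosSemidef →
      B * B = (Matrix.of fun i j => (Z i j).im)ᵀ * (Matrix.of fun i j => (Z i j).im) →
      IsLeast {x : ℝ | ∃ V : Matrix (Fin n) (Fin n) ℝ, V.IsSymm ∧
          ((V.map (fun a => (a : ℂ))) - Z).PosSemidef ∧ x = V.trace}
        ((Matrix.of fun i j => (Z i j).re).trace + B.trace) := by
  intro B hB hB2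
  classical
  set X : Matrix (Fin n) (Fin n) ℝ := Matrix.of fun i j => (Z i j).re with hXdef
  set Y : Matrix (Fin n) (Fin n) ℝ := Matrix.of fun i j => (Z i j).im with hYdef
  set Yc : Matrix (Fin n) (Fin n) ℂ := Y.map (fun a => (a : ℂ)) with hYcdef
  set H : Matrix (Fin n) (Fin n) ℂ := Complex.I • Yc with hHdef
  have hre : ∀ i j, (Z j i).re = (Z i j).re := fun i j => by
    have := congrArg Complex.re (hZ.1.apply i j); simpa using this
  have him : ∀ i j, (Z j i).im = -(Z i j).im := fun i j => by
    have := congrArg Complex.im (hZ.1.apply i j)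
    simp at this; linarith
  have hXsymm : X.IsSymm := by
    ext i j; exact hre i j
  have hYskew : ∀ i j, Y j i = -(Y i j) := fun i j => him i j
  have hZdecomp : Z = X.map (fun a => (a : ℂ)) + H := by
    ext i j
    show Z i j = ((Z i j).re : ℂ) + Complex.I * ((Z i j).im : ℂ)
    rw [mul_comm, Complex.re_add_im]
  have hHherm : H.IsHermitian := by
    ext i j
    show (starRingEnd ℂ) (Complex.I * ((Y j i : ℝ) : ℂ)) = Complex.I * ((Y i j : ℝ) : ℂ)
    rw [_root_.map_mul, Complex.conj_I, Complex.conj_ofReal, hYskew i j]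
    push_cast
    ring
  obtain ⟨A, hApsd, hAsq, hAH, hAmin⟩ := key H hHherm
  have hBc : (B.map (fun a => (a : ℂ))).PosSemidef := by
    obtain ⟨C, hC⟩ : ∃ C : Matrix (Fin n) (Fin n) ℝ, B = Cᵀ * C := by
      open scoped MatrixOrder Matrix.Norms.L2Operator in
      obtain ⟨C, hC⟩ := CStarAlgebra.nonneg_iff_eq_star_mul_self.mp hB.nonneg
      exact ⟨C, by rw [hC, star_eq_conjTranspose, conjTranspose_eq_transpose_of_trivial]⟩
    have : B.map (fun a => (a : ℂ)) = (C.map (fun a => (a : ℂ)))ᴴ * (C.map (fun a => (a : ℂ))) := by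
      ext i j
      simp [hC, Matrix.mul_apply, Matrix.conjTranspose_apply, Matrix.map_apply]
    rw [this]; exact posSemidef_conjTranspose_mul_self _
  have hBsq : (B.map (fun a => (a : ℂ))) ^ 2 = H ^ 2 := by
    rw [pow_two, pow_two]
    ext i j
    have h3 : ∑ k, B i k * B k j = ∑ k, Y k i * Y k j := by
      simpa [Matrix.mul_apply, hYdef] using congrFun (congrFun hB2 i) j
    have h4 : ∀ k, Y k i * Y k j = -(Y i k * Y k j) := fun k => by rw [hYskew i k]; ring
    simp only [h4] at h3
    calc ((B.map (fun a => (a : ℂ))) * (B.map (fun a => (a : ℂ)))) i j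
        = ((∑ k, B i k * B k j : ℝ) : ℂ) := by
          simp [Matrix.mul_apply, Matrix.map_apply]
      _ = ((∑ k, -(Y i k * Y k j) : ℝ) : ℂ) := by rw [h3]
      _ = (H * H) i j := by
          simp only [hHdef, hYcdef, Matrix.mul_apply, Matrix.smul_apply, Matrix.map_apply,
            smul_eq_mul]
          push_cast
          refine Finset.sum_congr rfl fun k _ => ?_
          rw [mul_mul_mul_comm, Complex.I_mul_I, neg_one_mul]
  have hBA : B.map (fun a => (a : ℂ)) = A := by
    open scoped MatrixOrder Matrix.Norms.L2Operator in
    exact (CFC.sq_eq_sq_iff _ _ hBc.nonneg hApsd.nonneg).mp (hBsq.trans hAsq.symm)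
  have htrBc : (B.map (fun a => (a : ℂ))).trace = (B.trace : ℂ) := by
    simp [Matrix.trace, Matrix.diag, Matrix.map_apply]
  have htrA : A.trace.re = B.trace := by
    rw [← hBA, htrBc, Complex.ofReal_re]
  constructor
  · refine ⟨X + B, ?_, ?_, ?_⟩
    · have hBsymm : B.IsSymm := by
        ext i j
        have := congrFun (congrFun hB.1 i) j
        simpa [Matrix.conjTranspose_apply] using this
      rw [Matrix.IsSymm, Matrix.transpose_add, hXsymm, hBsymm]
    · have : (X + B).map (fun a => (a : ℂ)) - Z = A - H := by
        rw [hZdecomp, ← hBA]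
        ext i j
        simp [Matrix.add_apply, Matrix.sub_apply, Matrix.map_apply]
      rw [this]; exact hAH
    · rw [Matrix.trace_add]
  · rintro x ⟨V, hVsymm, hVpsd, rfl⟩
    set W : Matrix (Fin n) (Fin n) ℂ := (V - X).map (fun a => (a : ℂ)) with hWdef
    have hW1 : (W - H).PosSemidef := by
      have : W - H = V.map (fun a => (a : ℂ)) - Z := by
        rw [hZdecomp]
        ext i j
        simp [hWdef, Matrix.sub_apply, Matrix.add_apply, Matrix.map_apply]
        ring
      rw [this]; exact hVpsd
    have hW2 : (W + H).PosSemidef := by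
      have hWt : Wᵀ = W := by
        rw [hWdef, ← Matrix.transpose_map, Matrix.transpose_sub, hVsymm, hXsymm]
      have hYt : Yᵀ = -Y := by
        ext i j
        simpa [Matrix.transpose_apply] using hYskew i j
      have hHt : Hᵀ = -H := by
        rw [hHdef, Matrix.transpose_smul, hYcdef, ← Matrix.transpose_map, hYt]
        ext i j
        simp [Matrix.map_apply, Matrix.smul_apply]
      have : (W - H)ᵀ = W + H := by
        rw [Matrix.transpose_sub, hWt, hHt, sub_neg_eq_add]
      rw [← this]; exact hW1.transpose
    have hle := hAmin W hW1 hW2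
    have htrW : W.trace.re = V.trace - X.trace := by
      simp [hWdef, Matrix.trace, Matrix.diag, Matrix.map_apply, Matrix.sub_apply,
        Complex.re_sum, Finset.sum_sub_distrib]
    rw [htrA, htrW] at hle
    linarith
end

section
/- (A-efficiency of the D-, E-optimal and standard tomography designs.) For every t ∈ (0, 1]: (2 + √t)² ≤ 3(2 + t), with equality if and only if t = 1, and 2(2 + t) < (2 + √t)². Consequently, writing t = 1 − |θ|² for a qubit Bloch vector θ with |θ| < 1, the A-efficiency η_A = (2 + √(1−|θ|²))² / (3(3 − |θ|²)) of the D-optimal, E-optimal and standard tomography designs satisfies 2/3 < η_A ≤ 1, with η_A = 1 if and only if θ = 0. -/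
/-- (A-efficiency of the D-, E-optimal and standard tomography designs.) For every
`t ∈ (0, 1]`: `(2 + √t)² ≤ 3(2 + t)` with equality iff `t = 1`, and
`2(2 + t) < (2 + √t)²`. Consequently, for a qubit Bloch vector `θ` with `|θ| < 1`, the
A-efficiency `η_A = (2 + √(1−|θ|²))² / (3(3 − |θ|²))` of the D-optimal, E-optimal and
standard tomography designs satisfies `2/3 < η_A ≤ 1`, with `η_A = 1` iff `θ = 0`. -/
theorem A_efficiency_bounds :
    (∀ t : ℝ, 0 < t → t ≤ 1 →
      (2 + Real.sqrt t) ^ 2 ≤ 3 * (2 + t) ∧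
      ((2 + Real.sqrt t) ^ 2 = 3 * (2 + t) ↔ t = 1) ∧
      2 * (2 + t) < (2 + Real.sqrt t) ^ 2) ∧
    ∀ θ : Fin 3 → ℝ, ∑ i, (θ i) ^ 2 < 1 →
      2 / 3 < (2 + Real.sqrt (1 - ∑ i, (θ i) ^ 2)) ^ 2 / (3 * (3 - ∑ i, (θ i) ^ 2)) ∧
      (2 + Real.sqrt (1 - ∑ i, (θ i) ^ 2)) ^ 2 / (3 * (3 - ∑ i, (θ i) ^ 2)) ≤ 1 ∧
      ((2 + Real.sqrt (1 - ∑ i, (θ i) ^ 2)) ^ 2 / (3 * (3 - ∑ i, (θ i) ^ 2)) = 1 ↔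
        θ = 0) := by
  have key : ∀ t : ℝ, 0 < t → t ≤ 1 →
      (2 + Real.sqrt t) ^ 2 ≤ 3 * (2 + t) ∧
      ((2 + Real.sqrt t) ^ 2 = 3 * (2 + t) ↔ t = 1) ∧
      2 * (2 + t) < (2 + Real.sqrt t) ^ 2 := by
    intro t ht ht1
    have hs0 : 0 < Real.sqrt t := Real.sqrt_pos.mpr ht
    have hst : Real.sqrt t ^ 2 = t := Real.sq_sqrt ht.le
    refine ⟨by nlinarith [sq_nonneg (1 - Real.sqrt t)], ?_, by nlinarith⟩
    constructor
    · intro h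
      have h1 : Real.sqrt t = 1 := by nlinarith [sq_nonneg (1 - Real.sqrt t)]
      nlinarith
    · intro h; subst h; simp [Real.sqrt_one]; ring
  refine ⟨key, ?_⟩
  intro θ hθ
  set S := ∑ i, (θ i) ^ 2 with hSdef
  have hS0 : 0 ≤ S := Finset.sum_nonneg fun i _ => sq_nonneg _
  have ht : 0 < 1 - S := by linarith
  have ht1 : 1 - S ≤ 1 := by linarith
  obtain ⟨h1, h2, h3⟩ := key (1 - S) ht ht1
  have hden : 0 < 3 * (3 - S) := by linarith
  have hSeq : (3 : ℝ) * (3 - S) = 3 * (2 + (1 - S)) := by ring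
  have hS0iff : S = 0 ↔ θ = 0 := by
    constructor
    · intro h
      funext i
      have := (Finset.sum_eq_zero_iff_of_nonneg (fun i _ => sq_nonneg (θ i))).mp h
        i (Finset.mem_univ i)
      have := pow_eq_zero_iff (n := 2) (by norm_num) |>.mp this
      simpa using this
    · intro h; simp [hSdef, h]
  refine ⟨?_, ?_, ?_⟩
  · rw [div_lt_div_iff₀ (by norm_num) hden]
    nlinarith
  · rw [div_le_one hden, hSeq]; exact h1
  · rw [div_eq_one_iff_eq hden.ne', hSeq, h2]
    constructor
    · intro h; exact hS0iff.mp (by linarith)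
    · intro h; have := hS0iff.mpr h; linarith
end

section
/- (D-efficiency ordering of the A- and E-optimal designs.) For every t ∈ [0, 1]: (2 + √t)³·√t ≤ (2 + t)³, with equality if and only if t = 1. Consequently, writing t = 1 − |θ|² for a qubit Bloch vector θ with |θ| < 1, the D-efficiencies satisfy η_D(e_A) = 27√(1−|θ|²)/(2+√(1−|θ|²))³ ≥ 27(1−|θ|²)/(3−|θ|²)³ = η_D(e_E), i.e. the A-optimal design is at least as efficient as the E-optimal design with respect to the D-optimality criterion. -/
/-- (D-efficiency ordering of the A- and E-optimal designs.) For every `t ∈ [0, 1]`: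
`(2 + √t)³·√t ≤ (2 + t)³` with equality iff `t = 1`. Consequently, for a qubit Bloch
vector `θ` with `|θ| < 1` and `t = 1 − |θ|²`, the D-efficiencies satisfy
`η_D(e_A) = 27√t/(2+√t)³ ≥ 27t/(2+t)³ = η_D(e_E)`. -/
theorem D_efficiency_A_ge_E :
    (∀ t : ℝ, 0 ≤ t → t ≤ 1 →
      (2 + Real.sqrt t) ^ 3 * Real.sqrt t ≤ (2 + t) ^ 3 ∧
      ((2 + Real.sqrt t) ^ 3 * Real.sqrt t = (2 + t) ^ 3 ↔ t = 1)) ∧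
    ∀ θ : Fin 3 → ℝ, ∑ i, (θ i) ^ 2 < 1 →
      27 * Real.sqrt (1 - ∑ i, (θ i) ^ 2) /
          (2 + Real.sqrt (1 - ∑ i, (θ i) ^ 2)) ^ 3 ≥
        27 * (1 - ∑ i, (θ i) ^ 2) / (3 - ∑ i, (θ i) ^ 2) ^ 3 := by
  have key : ∀ t : ℝ, 0 ≤ t → t ≤ 1 →
      (2 + Real.sqrt t) ^ 3 * Real.sqrt t ≤ (2 + t) ^ 3 ∧
      ((2 + Real.sqrt t) ^ 3 * Real.sqrt t = (2 + t) ^ 3 ↔ t = 1) := by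
    intro t ht ht1
    set s := Real.sqrt t with hs
    have hs0 : 0 ≤ s := Real.sqrt_nonneg t
    have hst : s ^ 2 = t := Real.sq_sqrt ht
    have hfac : (2 + t) ^ 3 - (2 + s) ^ 3 * s
        = (s - 1) ^ 2 * (s ^ 4 + 2 * s ^ 3 + 8 * s ^ 2 + 8 * s + 8) := by
      rw [← hst]; ring
    have hqpos : 0 < s ^ 4 + 2 * s ^ 3 + 8 * s ^ 2 + 8 * s + 8 := by positivity
    constructor
    · nlinarith [sq_nonneg (s - 1), mul_nonneg (sq_nonneg (s - 1)) hqpos.le]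
    · constructor
      · intro h
        have h1 : (s - 1) ^ 2 * (s ^ 4 + 2 * s ^ 3 + 8 * s ^ 2 + 8 * s + 8) = 0 := by
          linarith [hfac]
        have h2 : (s - 1) ^ 2 = 0 := by
          rcases mul_eq_zero.mp h1 with h' | h'
          · exact h'
          · linarith
        have hs1 : s = 1 := by nlinarith [sq_nonneg (s - 1)]
        rw [← hst, hs1]; norm_num
      · intro h; subst h
        have hs1 : s = 1 := by rw [hs, Real.sqrt_one]
        rw [hs1]; norm_num
  refine ⟨key, ?_⟩
  intro θ hθ
  set q := ∑ i, (θ i) ^ 2 with hq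
  have hq0 : 0 ≤ q := Finset.sum_nonneg fun i _ => sq_nonneg _
  have hu0 : 0 < 1 - q := by linarith
  have hu1 : 1 - q ≤ 1 := by linarith
  have hsu : 0 < Real.sqrt (1 - q) := Real.sqrt_pos.mpr hu0
  have hsu2 : Real.sqrt (1 - q) ^ 2 = 1 - q := Real.sq_sqrt hu0.le
  obtain ⟨hle, -⟩ := key (1 - q) hu0.le hu1
  have h3 : (3 : ℝ) - q = 2 + (1 - q) := by ring
  rw [ge_iff_le, h3, div_le_div_iff₀ (by positivity) (by positivity)]
  set u := Real.sqrt (1 - q) with hudef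
  rw [← hsu2] at hle ⊢
  nlinarith [mul_le_mul_of_nonneg_left hle hsu.le]
end

section
/- (Apparent superefficiency of perturbed local c-optimal designs.) Let θ₂ ∈ (0, 1) and δ ∈ ℝ, set v = (θ₂ cos δ, sin δ)ᵗ ∈ ℝ² and let J_δ = (1 − θ₂² sin²δ)^{-1}·v vᵗ be the (rank ≤ 1, positive semidefinite) 2×2 Fisher information matrix of the perturbed phase measurement. Then for c = (1, 0)ᵗ, the value Ψ_c(δ) := cᵗ J_δ⁺ c, where J_δ⁺ is the Moore–Penrose pseudoinverse of J_δ, equals (1 − θ₂² sin²δ)·θ₂² cos²δ / (θ₂² cos²δ + sin²δ)²; moreover Ψ_c(0) = θ₂^{-2} and Ψ_c(δ) < θ₂^{-2} for every δ ∈ (0, π). -/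
open Matrix Real

/-- The Fisher information matrix `J_δ = (1 − θ₂² sin²δ)⁻¹ · v vᵗ`, `v = (θ₂ cos δ, sin δ)ᵗ`,
of the perturbed phase measurement in the two-parameter qubit phase model. -/
noncomputable def Jdelta (θ₂ δ : ℝ) : Matrix (Fin 2) (Fin 2) ℝ :=
  (1 - θ₂ ^ 2 * Real.sin δ ^ 2)⁻¹ •
    Matrix.vecMulVec ![θ₂ * Real.cos δ, Real.sin δ] ![θ₂ * Real.cos δ, Real.sin δ]

/-- The c-optimality value `Ψ_c(δ) = (1 − θ₂² sin²δ)·θ₂² cos²δ / (θ₂² cos²δ + sin²δ)²`. -/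
noncomputable def PsiC (θ₂ δ : ℝ) : ℝ :=
  (1 - θ₂ ^ 2 * Real.sin δ ^ 2) * (θ₂ ^ 2 * Real.cos δ ^ 2) /
    (θ₂ ^ 2 * Real.cos δ ^ 2 + Real.sin δ ^ 2) ^ 2

/-- Uniqueness of the Moore-Penrose pseudoinverse. -/
lemma mp_unique {n : Type*} [Fintype n] [DecidableEq n]
    (A B C : Matrix n n ℝ)
    (hABA : A * B * A = A) (hBAB : B * A * B = B)
    (hABs : (A * B).IsSymm) (hBAs : (B * A).IsSymm)
    (hACA : A * C * A = A) (hCAC : C * A * C = C)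
    (hACs : (A * C).IsSymm) (hCAs : (C * A).IsSymm) : B = C := by
  have h1 : A * B = A * C := by
    calc A * B = (A * B)ᵀ := hABs.symm
    _ = Bᵀ * Aᵀ := by rw [Matrix.transpose_mul]
    _ = Bᵀ * (A * C * A)ᵀ := by rw [hACA]
    _ = Bᵀ * (Aᵀ * (A * C)ᵀ) := by rw [Matrix.transpose_mul]
    _ = Bᵀ * (Aᵀ * (A * C)) := by rw [hACs]
    _ = (Bᵀ * Aᵀ) * (A * C) := by simp only [Matrix.mul_assoc]
    _ = (A * B)ᵀ * (A * C) := by rw [Matrix.transpose_mul]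
    _ = (A * B) * (A * C) := by rw [hABs]
    _ = (A * B * A) * C := by simp only [Matrix.mul_assoc]
    _ = A * C := by rw [hABA]
  have h2 : C * A = B * A := by
    calc C * A = (C * A)ᵀ := hCAs.symm
    _ = Aᵀ * Cᵀ := by rw [Matrix.transpose_mul]
    _ = (A * B * A)ᵀ * Cᵀ := by rw [hABA]
    _ = (Aᵀ * Bᵀ) * (Aᵀ * Cᵀ) := by
        simp only [Matrix.transpose_mul, Matrix.mul_assoc]
    _ = (B * A)ᵀ * (C * A)ᵀ := by simp only [Matrix.transpose_mul]
    _ = (B * A) * (C * A) := by rw [hBAs, hCAs]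
    _ = B * (A * C * A) := by simp only [Matrix.mul_assoc]
    _ = B * A := by rw [hACA]
  have hfin : B = C := by
    calc B = B * A * B := hBAB.symm
    _ = B * (A * B) := by simp only [Matrix.mul_assoc]
    _ = B * (A * C) := by rw [h1]
    _ = (B * A) * C := by simp only [Matrix.mul_assoc]
    _ = (C * A) * C := by rw [← h2]
    _ = C := hCAC
  exact hfin

/-- (Apparent superefficiency of perturbed local c-optimal designs.) For `θ₂ ∈ (0,1)`:
each `J_δ` is positive semidefinite of rank at most one; for `c = (1,0)ᵗ` and any matrix
`P` satisfying the Moore–Penrose conditions for `J_δ`, one has `cᵗ P c = Ψ_c(δ)`;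
moreover `Ψ_c(0) = θ₂⁻²`, and `Ψ_c(δ) < θ₂⁻²` for every `δ ∈ (0, π)`. -/
theorem superefficiency_perturbed_c_optimal (θ₂ : ℝ) (h0 : 0 < θ₂) (h1 : θ₂ < 1) :
    (∀ δ : ℝ, (Jdelta θ₂ δ).PosSemidef ∧ (Jdelta θ₂ δ).rank ≤ 1) ∧
    (∀ δ : ℝ, ∀ P : Matrix (Fin 2) (Fin 2) ℝ,
      Jdelta θ₂ δ * P * Jdelta θ₂ δ = Jdelta θ₂ δ →
      P * Jdelta θ₂ δ * P = P →
      (Jdelta θ₂ δ * P).IsSymm → (P * Jdelta θ₂ δ).IsSymm →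
      ![1, 0] ⬝ᵥ P *ᵥ ![1, 0] = PsiC θ₂ δ) ∧
    PsiC θ₂ 0 = (θ₂ ^ 2)⁻¹ ∧
    (∀ δ : ℝ, 0 < δ → δ < Real.pi → PsiC θ₂ δ < (θ₂ ^ 2)⁻¹) := by
  have hx : ∀ δ : ℝ, 0 < 1 - θ₂ ^ 2 * Real.sin δ ^ 2 := by
    intro δ
    nlinarith [Real.sin_sq_le_one δ, sq_nonneg (Real.sin δ), sq_nonneg θ₂]
  have hn : ∀ δ : ℝ, 0 < θ₂ ^ 2 * Real.cos δ ^ 2 + Real.sin δ ^ 2 := by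
    intro δ
    nlinarith [Real.sin_sq_add_cos_sq δ, mul_nonneg (sq_nonneg (Real.sin δ)) (by nlinarith : (0:ℝ) ≤ 1 - θ₂ ^ 2), mul_pos (mul_pos h0 h0) (mul_pos h0 h0)]
  refine ⟨?_, ?_, ?_, ?_⟩
  · intro δ
    constructor
    · refine Matrix.PosSemidef.of_dotProduct_mulVec_nonneg ?_ ?_
      · ext i j
        fin_cases i <;> fin_cases j <;>
          simp [Jdelta, Matrix.vecMulVec_apply, Matrix.conjTranspose_apply, mul_comm]
      · intro x
        have h : star x ⬝ᵥ (Jdelta θ₂ δ) *ᵥ x =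
            (1 - θ₂ ^ 2 * Real.sin δ ^ 2)⁻¹ *
              (θ₂ * Real.cos δ * x 0 + Real.sin δ * x 1) ^ 2 := by
          simp [Jdelta, Matrix.mulVec, dotProduct, Matrix.vecMulVec_apply,
            Fin.sum_univ_two]
          ring
        rw [h]
        exact mul_nonneg (inv_nonneg.mpr (hx δ).le) (sq_nonneg _)
    · have hJ : Jdelta θ₂ δ =
          ((1 - θ₂ ^ 2 * Real.sin δ ^ 2)⁻¹ •
            Matrix.replicateCol Unit ![θ₂ * Real.cos δ, Real.sin δ]) *
            Matrix.replicateRow Unit ![θ₂ * Real.cos δ, Real.sin δ] := by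
        rw [Jdelta, Matrix.vecMulVec_eq Unit, Matrix.smul_mul]
      rw [hJ]
      calc (((1 - θ₂ ^ 2 * Real.sin δ ^ 2)⁻¹ •
            Matrix.replicateCol Unit ![θ₂ * Real.cos δ, Real.sin δ]) *
            Matrix.replicateRow Unit ![θ₂ * Real.cos δ, Real.sin δ]).rank
          ≤ ((1 - θ₂ ^ 2 * Real.sin δ ^ 2)⁻¹ •
            Matrix.replicateCol Unit ![θ₂ * Real.cos δ, Real.sin δ]).rank :=
            Matrix.rank_mul_le_left _ _
        _ ≤ Fintype.card Unit := Matrix.rank_le_card_width _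
        _ = 1 := by simp
  · intro δ P hJPJ hPJP hJPs hPJs
    set v : Fin 2 → ℝ := ![θ₂ * Real.cos δ, Real.sin δ] with hv
    set M : Matrix (Fin 2) (Fin 2) ℝ := Matrix.vecMulVec v v with hM
    set α : ℝ := (1 - θ₂ ^ 2 * Real.sin δ ^ 2)⁻¹ with hα
    set nn : ℝ := θ₂ ^ 2 * Real.cos δ ^ 2 + Real.sin δ ^ 2 with hnn
    have hα0 : 0 < α := by rw [hα]; exact inv_pos.mpr (hx δ)
    have hnn0 : 0 < nn := hn δ
    set Q : Matrix (Fin 2) (Fin 2) ℝ :=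
      ((1 - θ₂ ^ 2 * Real.sin δ ^ 2) / nn ^ 2) • M with hQ
    have hMM : M * M = nn • M := by
      ext i j
      fin_cases i <;> fin_cases j <;>
        simp [hM, hv, hnn, Matrix.vecMulVec_apply, Matrix.mul_apply, Fin.sum_univ_two,
          Matrix.smul_apply] <;> ring
    have hJ : Jdelta θ₂ δ = α • M := rfl
    have hMs : Mᵀ = M := by
      ext i j
      simp [hM, Matrix.vecMulVec_apply, Matrix.transpose_apply, mul_comm]
    have hxne : (1 - θ₂ ^ 2 * Real.sin δ ^ 2) ≠ 0 := (hx δ).ne'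
    have hnne : nn ≠ 0 := hnn0.ne'
    -- Q satisfies the four Moore-Penrose conditions
    have hprod : ∀ a b : ℝ, (a • M) * (b • M) = (a * b * nn) • M := by
      intro a b
      rw [Matrix.smul_mul, Matrix.mul_smul, hMM, smul_smul, smul_smul]
    have hJQJ : Jdelta θ₂ δ * Q * Jdelta θ₂ δ = Jdelta θ₂ δ := by
      rw [hJ, hQ, hprod, Matrix.smul_mul, Matrix.mul_smul, hMM, smul_smul, smul_smul]
      congr 1
      rw [hα]
      field_simp
    have hQJQ : Q * Jdelta θ₂ δ * Q = Q := by
      rw [hJ, hQ, hprod, Matrix.smul_mul, Matrix.mul_smul, hMM, smul_smul, smul_smul]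
      congr 1
      rw [hα]
      field_simp
    have hJQs : (Jdelta θ₂ δ * Q).IsSymm := by
      rw [hJ, hQ, hprod, Matrix.IsSymm, Matrix.transpose_smul, hMs]
    have hQJs : (Q * Jdelta θ₂ δ).IsSymm := by
      rw [hJ, hQ, hprod, Matrix.IsSymm, Matrix.transpose_smul, hMs]
    have hPQ : P = Q :=
      mp_unique (Jdelta θ₂ δ) P Q hJPJ hPJP hJPs hPJs hJQJ hQJQ hJQs hQJs
    rw [hPQ]
    simp [hQ, hM, hv, hnn, PsiC, Matrix.mulVec, dotProduct,
      Matrix.vecMulVec_apply, Fin.sum_univ_two, Matrix.smul_apply]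
    field_simp
  · simp [PsiC]
    have hθ : θ₂ ^ 2 ≠ 0 := by positivity
    field_simp
  · intro δ hδ1 hδ2
    have hs : 0 < Real.sin δ := Real.sin_pos_of_pos_of_lt_pi hδ1 hδ2
    have hpy := Real.sin_sq_add_cos_sq δ
    have hc2 : Real.cos δ ^ 2 < 1 := by nlinarith
    have hfact : 0 < (1 - Real.cos δ ^ 2) *
        (1 + (θ₂ ^ 6 - (1 - θ₂ ^ 2) ^ 2) * Real.cos δ ^ 2) := by
      apply mul_pos (by linarith)
      nlinarith [Real.cos_sq_le_one δ, sq_nonneg (Real.cos δ), sq_nonneg θ₂,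
        sq_nonneg (1 - θ₂ ^ 2), pow_pos h0 6, sq_nonneg (θ₂ * Real.cos δ)]
    have hn2 : 0 < (θ₂ ^ 2 * Real.cos δ ^ 2 + Real.sin δ ^ 2) ^ 2 := by positivity
    rw [PsiC, div_lt_iff₀ hn2]
    have hθ2 : (0:ℝ) < θ₂ ^ 2 := by positivity
    have hinv : θ₂ ^ 2 * (θ₂ ^ 2)⁻¹ = 1 := mul_inv_cancel₀ hθ2.ne'
    have hs2 : Real.sin δ ^ 2 = 1 - Real.cos δ ^ 2 := by linarith
    rw [hs2]
    rw [← sub_pos]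
    have hkey : θ₂ ^ 2 * ((θ₂ ^ 2)⁻¹ * (θ₂ ^ 2 * Real.cos δ ^ 2 + (1 - Real.cos δ ^ 2)) ^ 2 -
        (1 - θ₂ ^ 2 * (1 - Real.cos δ ^ 2)) * (θ₂ ^ 2 * Real.cos δ ^ 2)) =
        (1 - Real.cos δ ^ 2) * (1 + (θ₂ ^ 6 - (1 - θ₂ ^ 2) ^ 2) * Real.cos δ ^ 2) := by
      field_simp
      ring
    nlinarith [hkey, hfact, hθ2]
end
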